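/- arXiv:2410.23034 — 7 statements merged into one kernel-verified Lean document; each statement's English description precedes it below -/
import Mathlib

section
/- Let k ≥ 2 be an integer and let G = BS(1,k) = ℤ[1/k] ⋊_φ ℤ. Then there exists a sequence (F_n) of nonempty finite subsets of G such that: (i) for every x ∈ G, |F_n·x △ F_n|/|F_n| → 0 as n → ∞ (i.e. (F_n) is a right Følner sequence); and (ii) c(F_n) = |F_n| for every n, so in particular the conjugacy ratio limsup_{n→∞} c(F_n)/|F_n| equals 1. -/
noncomputable section

/-- `ℤ[1/k]`: the additive subgroup `{a/kⁱ : a ∈ ℤ, i ∈ ℕ}` of `ℚ`. -/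
def zOneOver (k : ℕ) : AddSubgroup ℚ :=
  AddSubgroup.closure {x : ℚ | ∃ (a : ℤ) (i : ℕ), x = (a : ℚ) / (k : ℚ) ^ i}

lemma intCast_mem_zOneOver (k : ℕ) (a : ℤ) : (a : ℚ) ∈ zOneOver k :=
  AddSubgroup.subset_closure ⟨a, 0, by simp⟩

/-- Multiplication by `k` as an additive automorphism of `ℚ`. -/
def mulQ (k : ℕ) (hk : 2 ≤ k) : AddAut ℚ where
  toFun x := (k : ℚ) * x
  invFun x := ((k : ℚ))⁻¹ * x
  left_inv x := by
    have hk0 : (k : ℚ) ≠ 0 := by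
      have : 0 < k := by omega
      exact_mod_cast this.ne'
    field_simp
  right_inv x := by
    have hk0 : (k : ℚ) ≠ 0 := by
      have : 0 < k := by omega
      exact_mod_cast this.ne'
    field_simp
  map_add' x y := by ring

/-- The action of the generator `t` of `ℤ` on `ℚ` (written multiplicatively). -/
def bsAut (k : ℕ) (hk : 2 ≤ k) : MulAut (Multiplicative ℚ) :=
  AddEquiv.toMultiplicative (mulQ k hk)

lemma bsAut_apply (k : ℕ) (hk : 2 ≤ k) (y : Multiplicative ℚ) :
    Multiplicative.toAdd (bsAut k hk y) = (k : ℚ) * Multiplicative.toAdd y := rfl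

lemma bsAut_inv_apply (k : ℕ) (hk : 2 ≤ k) (y : Multiplicative ℚ) :
    Multiplicative.toAdd ((bsAut k hk)⁻¹ y) = ((k : ℚ))⁻¹ * Multiplicative.toAdd y := rfl

lemma bsAut_zpow (k : ℕ) (hk : 2 ≤ k) (n : ℤ) :
    ∀ y : Multiplicative ℚ,
      Multiplicative.toAdd ((bsAut k hk ^ n) y) = (k : ℚ) ^ n * Multiplicative.toAdd y := by
  have hk0 : (k : ℚ) ≠ 0 := by
    have : 0 < k := by omega
    exact_mod_cast this.ne'
  induction n using Int.induction_on with
  | zero => intro y; simp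
  | succ m ih =>
      intro y
      rw [zpow_add_one, MulAut.mul_apply, ih, bsAut_apply, zpow_add_one₀ hk0]
      ring
  | pred m ih =>
      intro y
      rw [zpow_sub_one, MulAut.mul_apply, ih, bsAut_inv_apply, zpow_sub_one₀ hk0]
      ring

lemma zOneOver_smul (k : ℕ) (hk : 2 ≤ k) (n : ℤ) {x : ℚ} (hx : x ∈ zOneOver k) :
    (k : ℚ) ^ n * x ∈ zOneOver k := by
  have hk0 : (k : ℚ) ≠ 0 := by
    have : 0 < k := by omega
    exact_mod_cast this.ne'
  induction hx using AddSubgroup.closure_induction with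
  | mem x hx =>
      obtain ⟨a, i, rfl⟩ := hx
      apply AddSubgroup.subset_closure
      rcases le_or_gt (i : ℤ) n with h | h
      · refine ⟨a * k ^ (n - i).toNat, 0, ?_⟩
        have h1 : ((n - i).toNat : ℤ) = n - i := Int.toNat_of_nonneg (by omega)
        push_cast
        rw [← zpow_natCast (k : ℚ) (n - i).toNat]
        rw [h1]
        rw [zpow_sub₀ hk0]
        field_simp
        simp only [zpow_natCast]
        try ring
      · refine ⟨a, (i - n).toNat, ?_⟩
        have h1 : (((i : ℤ) - n).toNat : ℤ) = (i : ℤ) - n := Int.toNat_of_nonneg (by omega)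
        rw [← zpow_natCast (k : ℚ) i, ← zpow_natCast (k : ℚ) ((i : ℤ) - n).toNat, h1,
          zpow_sub₀ hk0]
        field_simp
  | zero => simpa using (zOneOver k).zero_mem
  | add x y hx hy ihx ihy =>
      rw [mul_add]
      exact add_mem ihx ihy
  | neg x hx ihx =>
      rw [mul_neg]
      exact neg_mem ihx

/-- The ambient group `ℚ ⋊_φ ℤ`, in which `BS(1,k) = ℤ[1/k] ⋊_φ ℤ` sits. -/
abbrev BSAmbient (k : ℕ) (hk : 2 ≤ k) :=
  Multiplicative ℚ ⋊[zpowersHom (MulAut (Multiplicative ℚ)) (bsAut k hk)] Multiplicative ℤ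

/-- The Baumslag–Solitar group `BS(1,k) = ℤ[1/k] ⋊_φ ℤ`, realised as the subgroup of
`ℚ ⋊_φ ℤ` of elements whose first coordinate lies in `ℤ[1/k]`. -/
def BS (k : ℕ) (hk : 2 ≤ k) : Subgroup (BSAmbient k hk) where
  carrier := {g | Multiplicative.toAdd g.left ∈ zOneOver k}
  one_mem' := by
    simpa using (zOneOver k).zero_mem
  mul_mem' := by
    intro a b ha hb
    simp only [Set.mem_setOf_eq, SemidirectProduct.mul_left, toAdd_mul] at *
    refine add_mem ha ?_
    rw [zpowersHom_apply, bsAut_zpow]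
    exact zOneOver_smul k hk _ hb
  inv_mem' := by
    intro a ha
    simp only [Set.mem_setOf_eq, SemidirectProduct.inv_left, zpowersHom_apply, toAdd_inv] at *
    rw [bsAut_zpow, toAdd_inv, mul_neg]
    exact neg_mem (zOneOver_smul k hk _ ha)

/-- The element `(x, tⁿ)` of `BS(1,k)`, for `x ∈ ℤ[1/k]` and `n ∈ ℤ`. -/
def bsElem (k : ℕ) (hk : 2 ≤ k) (x : ℚ) (hx : x ∈ zOneOver k) (n : ℤ) : ↥(BS k hk) :=
  ⟨⟨Multiplicative.ofAdd x, Multiplicative.ofAdd n⟩, hx⟩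


/-!
Take `Fₙ = {(k^(5n+7) (k^(3n+3) + r), t^(6n+7+j)) : 0 ≤ r < k^(3n+3), 0 ≤ j ≤ n}`.

Conjugating `(a, tᴺ)` by `(z, tᵐ)` gives `(kᵐ a + (1 - kᴺ) z, tᴺ)`. So conjugate elements of `Fₙ`
share `j`, and after clearing denominators `u = k^q + r`, `u' = k^q + r'` (with `q = 3n+3`) satisfy
`kᵐ u ≡ u' (mod kᴺ - 1)` for some `0 ≤ m < N = 6n+7+j`. As `u, u'` lie in `[k^q, 2k^q)` and
`2q < N`, for `0 < m < N - q` the difference `kᵐ u - u'` lies strictly between `0` and `kᴺ - 1`;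
for `m ≥ N - q` the same holds for `k^(N-m) u' - u`. Hence `m = 0` and `u = u'`: the elements of
`Fₙ` are pairwise non-conjugate.

The factor `k^(5n+7)` turns right multiplication by a fixed `(b/kᵛ, tʷ)`, `v ≤ n`, into the
translation of `(r, j)` by `(k^(n+j-v) b, w)`, which moves at most a fraction
`O(|b|/k^(n+3) + |w|/n)` of the box `[0, k^(3n+3)) × [0, n]` out of it.
-/

lemma exists_eq_intCast_div_pow_of_mem_zOneOver {k : ℕ} (hk : k ≠ 0) {x : ℚ}
    (hx : x ∈ zOneOver k) : ∃ (b : ℤ) (v : ℕ), x = b / (k : ℚ) ^ v := by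
  have hk' : (k : ℚ) ≠ 0 := by exact_mod_cast hk
  induction hx using AddSubgroup.closure_induction with
  | mem x hx => exact hx
  | zero => exact ⟨0, 0, by simp⟩
  | add x y _ _ ihx ihy =>
    obtain ⟨a, i, rfl⟩ := ihx
    obtain ⟨b, j, rfl⟩ := ihy
    exact ⟨a * k ^ j + b * k ^ i, i + j, by field_simp; push_cast; ring⟩
  | neg x _ ih =>
    obtain ⟨a, i, rfl⟩ := ih
    exact ⟨-a, i, by push_cast; ring⟩

lemma exists_pow_mul_modEq_of_sub_eq_mul {k : ℕ} (hk : k ≠ 0) {a a' : ℤ} {N : ℕ} {m : ℤ}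
    {z : ℚ} (hz : z ∈ zOneOver k) (h : (k : ℚ) ^ m * a - a' = ((k : ℚ) ^ N - 1) * z) :
    ∃ α β : ℕ, (k : ℤ) ^ α * a ≡ (k : ℤ) ^ β * a' [ZMOD (k : ℤ) ^ N - 1] := by
  have hk' : (k : ℚ) ≠ 0 := by exact_mod_cast hk
  obtain ⟨b, v, rfl⟩ := exists_eq_intCast_div_pow_of_mem_zOneOver hk hz
  have hm : (k : ℚ) ^ m = k ^ m.toNat / k ^ (-m).toNat := by
    rw [← zpow_natCast, ← zpow_natCast, ← zpow_sub₀ hk', Int.toNat_sub_toNat_neg]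
  refine ⟨m.toNat + v, (-m).toNat + v, (Int.modEq_iff_dvd.mpr ⟨k ^ (-m).toNat * b, ?_⟩).symm⟩
  rw [hm] at h
  field_simp at h
  qify
  linear_combination h

lemma pow_modEq_pow_mod (k : ℤ) (N γ : ℕ) : k ^ γ ≡ k ^ (γ % N) [ZMOD k ^ N - 1] :=
  calc k ^ γ = (k ^ N) ^ (γ / N) * k ^ (γ % N) := by rw [← pow_mul, ← pow_add, Nat.div_add_mod]
    _ ≡ 1 ^ (γ / N) * k ^ (γ % N) [ZMOD k ^ N - 1] :=
      ((Int.modEq_sub _ _).pow _).mul_right _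
    _ = k ^ (γ % N) := by rw [one_pow, one_mul]

/-- `k ^ (N - 1)` inverts `k` modulo `k ^ N - 1`. -/
lemma exists_lt_pow_mul_modEq {k a a' : ℤ} {N α β : ℕ} (hN : 0 < N)
    (h : k ^ α * a ≡ k ^ β * a' [ZMOD k ^ N - 1]) :
    ∃ m < N, k ^ m * a ≡ a' [ZMOD k ^ N - 1] := by
  refine ⟨(α + (N - 1) * β) % N, Nat.mod_lt _ hN, ?_⟩
  calc k ^ ((α + (N - 1) * β) % N) * a
      ≡ k ^ (α + (N - 1) * β) * a [ZMOD k ^ N - 1] :=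
        ((pow_modEq_pow_mod k N _).symm.mul_right a)
    _ = k ^ ((N - 1) * β) * (k ^ α * a) := by ring
    _ ≡ k ^ ((N - 1) * β) * (k ^ β * a') [ZMOD k ^ N - 1] := h.mul_left _
    _ = k ^ (N * β) * a' := by
        rw [← mul_assoc, ← pow_add, ← Nat.add_one_mul, Nat.sub_one_add_one hN.ne']
    _ ≡ k ^ (N * β % N) * a' [ZMOD k ^ N - 1] := (pow_modEq_pow_mod k N _).mul_right _
    _ = a' := by rw [Nat.mul_mod_right, pow_zero, one_mul]

lemma not_pow_mul_modEq_of_mem_Ico {k : ℤ} (hk : 2 ≤ k) {q m N : ℕ} (hm : 0 < m)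
    (hmq : m + q < N) {u u' : ℤ} (hu : u ∈ Set.Ico (k ^ q) (2 * k ^ q))
    (hu' : u' ∈ Set.Ico (k ^ q) (2 * k ^ q)) : ¬ k ^ m * u ≡ u' [ZMOD k ^ N - 1] := by
  intro h
  obtain ⟨hu₁, hu₂⟩ := hu
  obtain ⟨hu'₁, hu'₂⟩ := hu'
  have hkm : k ≤ k ^ m := le_self_pow₀ (by omega) hm.ne'
  have hkq : 0 < k ^ q := by positivity
  have hN : 2 * (k ^ m * k ^ q) ≤ k ^ N :=
    calc 2 * (k ^ m * k ^ q) ≤ k ^ (m + q + 1) := by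
          rw [pow_succ, pow_add]; nlinarith [mul_pos (pow_pos (by omega : 0 < k) m) hkq]
      _ ≤ k ^ N := pow_le_pow_right₀ (by omega) hmq
  have hpos : 0 < k ^ m * u - u' := by nlinarith
  have hlt : k ^ m * u - u' < k ^ N - 1 := by nlinarith
  exact hpos.ne' (Int.eq_zero_of_abs_lt_dvd h.symm.dvd (by rwa [abs_of_pos hpos]))

lemma eq_of_pow_mul_modEq {k : ℤ} (hk : 2 ≤ k) {q m N : ℕ} (h2q : 2 * q < N) (hm : m < N)
    {u u' : ℤ} (hu : u ∈ Set.Ico (k ^ q) (2 * k ^ q)) (hu' : u' ∈ Set.Ico (k ^ q) (2 * k ^ q))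
    (h : k ^ m * u ≡ u' [ZMOD k ^ N - 1]) : u = u' := by
  rcases Nat.eq_zero_or_pos m with rfl | hm₀
  · rw [pow_zero, one_mul] at h
    have hq : 2 * k ^ q ≤ k ^ N :=
      calc 2 * k ^ q ≤ k ^ (q + 1) := by rw [pow_succ]; nlinarith [pow_pos (by omega : 0 < k) q]
        _ ≤ k ^ N := pow_le_pow_right₀ (by omega) (by omega)
    have := Int.eq_zero_of_abs_lt_dvd h.dvd
      (by rw [abs_lt]; constructor <;> linarith [hu.1, hu.2, hu'.1, hu'.2])
    linarith
  · by_cases hmq : m + q < N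
    · exact absurd h (not_pow_mul_modEq_of_mem_Ico hk hm₀ hmq hu hu')
    · refine absurd ?_ (not_pow_mul_modEq_of_mem_Ico hk (q := q) (m := N - m) (N := N)
        (by omega) (by omega) hu' hu)
      calc k ^ (N - m) * u' ≡ k ^ (N - m) * (k ^ m * u) [ZMOD k ^ N - 1] := h.symm.mul_left _
        _ = k ^ N * u := by rw [← mul_assoc, ← pow_add, Nat.sub_add_cancel hm.le]
        _ ≡ 1 * u [ZMOD k ^ N - 1] := (Int.modEq_sub _ _).mul_right _
        _ = u := one_mul u

lemma ncard_symmDiff_image_mul_right_add_le {G : Type*} [Mul G] [IsRightCancelMul G]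
    {F S : Set G} (hF : F.Finite) (hSF : S ⊆ F) {x : G} (hSx : (· * x) '' S ⊆ F) :
    (symmDiff ((· * x) '' F) F).ncard + 2 * S.ncard ≤ 2 * F.ncard := by
  set T := (· * x) '' S
  have hinj : Function.Injective (· * x) := mul_left_injective x
  have hTFx : T ⊆ (· * x) '' F := Set.image_mono hSF
  have hTfin : T.Finite := (hF.subset hSF).image _
  have hsub : symmDiff ((· * x) '' F) F ⊆ ((· * x) '' F \ T) ∪ (F \ T) := by
    rintro g (⟨hg, hgF⟩ | ⟨hg, hgFx⟩)
    · exact Or.inl ⟨hg, fun hgT => hgF (hSx hgT)⟩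
    · exact Or.inr ⟨hg, fun hgT => hgFx (hTFx hgT)⟩
  have hle : (symmDiff ((· * x) '' F) F).ncard ≤ ((· * x) '' F \ T).ncard + (F \ T).ncard :=
    (Set.ncard_le_ncard hsub ((hF.image _).sdiff.union hF.sdiff)).trans (Set.ncard_union_le _ _)
  rw [Set.ncard_sdiff hTFx hTfin, Set.ncard_sdiff hSx hTfin, Set.ncard_image_of_injective F hinj,
    Set.ncard_image_of_injective S hinj] at hle
  have := Set.ncard_le_ncard hSF hF
  omega

def marginBox (L H c d : ℤ) : Finset (ℤ × ℤ) :=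
  Finset.Ico c (L - c) ×ˢ Finset.Ico d (H - d)

lemma marginBox_subset_marginBox {L H c d c' d' : ℤ} (hc : c' ≤ c) (hd : d' ≤ d) :
    marginBox L H c d ⊆ marginBox L H c' d' :=
  Finset.product_subset_product (Finset.Ico_subset_Ico hc (by omega))
    (Finset.Ico_subset_Ico hd (by omega))

lemma card_marginBox (L H c d : ℤ) :
    (marginBox L H c d).card = (L - 2 * c).toNat * (H - 2 * d).toNat := by
  rw [marginBox, Finset.card_product, Int.card_Ico, Int.card_Ico]
  ring_nf

lemma card_marginBox_zero_sub_card_le {L H c d : ℤ} (hc : 0 ≤ c) (hd : 0 ≤ d) (hcL : 2 * c ≤ L)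
    (hdH : 2 * d ≤ H) :
    ((marginBox L H 0 0).card : ℤ) - (marginBox L H c d).card ≤ 2 * c * H + 2 * d * L := by
  simp only [card_marginBox, Nat.cast_mul, Int.toNat_of_nonneg (by omega : 0 ≤ L - 2 * c),
    Int.toNat_of_nonneg (by omega : 0 ≤ H - 2 * d), mul_zero, sub_zero,
    Int.toNat_of_nonneg (by omega : 0 ≤ L), Int.toNat_of_nonneg (by omega : 0 ≤ H)]
  nlinarith

namespace BS

variable {k : ℕ} {hk : 2 ≤ k}

@[simp]
lemma toAdd_left_mul (g h : BSAmbient k hk) :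
    Multiplicative.toAdd (g * h).left = Multiplicative.toAdd g.left +
      (k : ℚ) ^ Multiplicative.toAdd g.right * Multiplicative.toAdd h.left := by
  rw [SemidirectProduct.mul_left, toAdd_mul, zpowersHom_apply, bsAut_zpow]

@[simp]
lemma toAdd_right_mul (g h : BSAmbient k hk) :
    Multiplicative.toAdd (g * h).right =
      Multiplicative.toAdd g.right + Multiplicative.toAdd h.right := rfl

@[simp]
lemma toAdd_bsElem_left (x : ℚ) (hx : x ∈ zOneOver k) (n : ℤ) :
    Multiplicative.toAdd (bsElem k hk x hx n : BSAmbient k hk).left = x := rfl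

@[simp]
lemma toAdd_bsElem_right (x : ℚ) (hx : x ∈ zOneOver k) (n : ℤ) :
    Multiplicative.toAdd (bsElem k hk x hx n : BSAmbient k hk).right = n := rfl

lemma ext_toAdd {g h : BS k hk}
    (hl : Multiplicative.toAdd (g : BSAmbient k hk).left =
      Multiplicative.toAdd (h : BSAmbient k hk).left)
    (hr : Multiplicative.toAdd (g : BSAmbient k hk).right =
      Multiplicative.toAdd (h : BSAmbient k hk).right) :
    g = h :=
  Subtype.ext (SemidirectProduct.ext (Multiplicative.toAdd.injective hl)
    (Multiplicative.toAdd.injective hr))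

lemma isConj_bsElem {x x' : ℚ} {hx : x ∈ zOneOver k} {hx' : x' ∈ zOneOver k} {N N' : ℤ}
    (h : IsConj (bsElem k hk x hx N) (bsElem k hk x' hx' N')) :
    N = N' ∧ ∃ m : ℤ, ∃ z ∈ zOneOver k, (k : ℚ) ^ m * x - x' = ((k : ℚ) ^ N - 1) * z := by
  obtain ⟨c, hc⟩ := isConj_iff.mp h
  have hc' : c * bsElem k hk x hx N = bsElem k hk x' hx' N' * c := by
    rw [← hc]; group
  have hl := congrArg (fun g : BS k hk => Multiplicative.toAdd (g : BSAmbient k hk).left) hc'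
  have hr := congrArg (fun g : BS k hk => Multiplicative.toAdd (g : BSAmbient k hk).right) hc'
  simp only [Subgroup.coe_mul, toAdd_left_mul, toAdd_right_mul, toAdd_bsElem_left,
    toAdd_bsElem_right] at hl hr
  obtain rfl : N = N' := by omega
  exact ⟨rfl, Multiplicative.toAdd (c : BSAmbient k hk).right, _, c.2, by linear_combination hl⟩

variable (hk) in
def boxElem (n : ℕ) (p : ℤ × ℤ) : BS k hk :=
  bsElem k hk (((k : ℤ) ^ (5 * n + 7) * ((k : ℤ) ^ (3 * n + 3) + p.1) : ℤ) : ℚ)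
    (intCast_mem_zOneOver k _) (6 * n + 7 + p.2)

variable (hk) in
lemma boxElem_injective (n : ℕ) : Function.Injective (boxElem hk n) := by
  rintro ⟨r, j⟩ ⟨r', j'⟩ h
  have hl := congrArg (fun g : BS k hk => Multiplicative.toAdd (g : BSAmbient k hk).left) h
  have hr := congrArg (fun g : BS k hk => Multiplicative.toAdd (g : BSAmbient k hk).right) h
  simp only [boxElem, toAdd_bsElem_left, toAdd_bsElem_right, Int.cast_inj] at hl hr
  have := mul_left_cancel₀ (pow_ne_zero (5 * n + 7) (by omega : (k : ℤ) ≠ 0)) hl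
  ext <;> dsimp only <;> omega

lemma boxElem_mul {n v : ℕ} (hv : v ≤ n) {b : ℤ} {x : BS k hk}
    (hx : Multiplicative.toAdd (x : BSAmbient k hk).left = b / (k : ℚ) ^ v) (r : ℤ) (j : ℕ) :
    boxElem hk n (r, j) * x = boxElem hk n
      (r + k ^ (n + j - v) * b, j + Multiplicative.toAdd (x : BSAmbient k hk).right) := by
  apply ext_toAdd
  · have hk' : (k : ℚ) ≠ 0 := by positivity
    have hexp : (6 * n + 7 + j : ℤ) = ((5 * n + 7 + (n + j - v) + v : ℕ) : ℤ) := by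
      push_cast; omega
    simp only [boxElem, Subgroup.coe_mul, toAdd_left_mul, toAdd_bsElem_left, toAdd_bsElem_right,
      hx, hexp, zpow_natCast, pow_add]
    field_simp
    push_cast
    ring
  · simp only [boxElem, Subgroup.coe_mul, toAdd_right_mul, toAdd_bsElem_right]
    ring

lemma eq_of_isConj_boxElem {n : ℕ} {p p' : ℤ × ℤ} (hr : p.1 ∈ Set.Ico 0 ((k : ℤ) ^ (3 * n + 3)))
    (hr' : p'.1 ∈ Set.Ico 0 ((k : ℤ) ^ (3 * n + 3))) (hj : 0 ≤ p.2)
    (h : IsConj (boxElem hk n p) (boxElem hk n p')) : p = p' := by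
  obtain ⟨r, j⟩ := p
  obtain ⟨r', j'⟩ := p'
  obtain ⟨hjj, m, z, hz, hmz⟩ := isConj_bsElem h
  obtain rfl : j = j' := by omega
  lift j to ℕ using hj
  have hexp : (6 * n + 7 + j : ℤ) = ((6 * n + 7 + j : ℕ) : ℤ) := by push_cast; ring
  rw [hexp, zpow_natCast] at hmz
  obtain ⟨α, β, hαβ⟩ := exists_pow_mul_modEq_of_sub_eq_mul (by omega) hz hmz
  obtain ⟨m, hm, hmu⟩ := exists_lt_pow_mul_modEq (k := (k : ℤ)) (α := α + (5 * n + 7))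
    (β := β + (5 * n + 7)) (N := 6 * n + 7 + j) (by omega)
    (by simpa only [← mul_assoc, ← pow_add] using hαβ)
  have hwindow {s : ℤ} (hs : s ∈ Set.Ico 0 ((k : ℤ) ^ (3 * n + 3))) :
      (k : ℤ) ^ (3 * n + 3) + s ∈ Set.Ico ((k : ℤ) ^ (3 * n + 3)) (2 * (k : ℤ) ^ (3 * n + 3)) :=
    ⟨by linarith [hs.1], by linarith [hs.2]⟩
  have := eq_of_pow_mul_modEq (by omega) (by omega) hm (hwindow hr) (hwindow hr') hmu
  exact Prod.ext (add_left_cancel this) rfl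

variable (hk) in
def folnerSet (n : ℕ) : Finset (BS k hk) :=
  (marginBox (k ^ (3 * n + 3)) (n + 1) 0 0).image (boxElem hk n)

variable (hk) in
lemma card_folnerSet (n : ℕ) : (folnerSet hk n).card = k ^ (3 * n + 3) * (n + 1) := by
  rw [folnerSet, Finset.card_image_of_injective _ (boxElem_injective hk n), card_marginBox]
  simp only [mul_zero, sub_zero]
  rw [← Nat.cast_pow, ← Nat.cast_add_one, Int.toNat_natCast, Int.toNat_natCast]

variable (hk) in
lemma injOn_conjClassesMk_folnerSet (n : ℕ) :
    Set.InjOn ConjClasses.mk (folnerSet hk n : Set (BS k hk)) := by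
  intro g hg g' hg' hgg'
  obtain ⟨p, hp, rfl⟩ := Finset.mem_image.mp hg
  obtain ⟨p', hp', rfl⟩ := Finset.mem_image.mp hg'
  simp only [marginBox, Finset.mem_product, Finset.mem_Ico, sub_zero] at hp hp'
  rw [eq_of_isConj_boxElem ⟨hp.1.1, hp.1.2⟩ ⟨hp'.1.1, hp'.1.2⟩ hp.2.1
    (ConjClasses.mk_eq_mk_iff_isConj.mp hgg')]

lemma boxElem_mul_mem_folnerSet {n v : ℕ} (hv : v ≤ n) {b : ℤ} {x : BS k hk}
    (hx : Multiplicative.toAdd (x : BSAmbient k hk).left = b / (k : ℚ) ^ v) {p : ℤ × ℤ}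
    (hp : p ∈ marginBox (k ^ (3 * n + 3)) (n + 1) (k ^ (2 * n) * |b|)
      |Multiplicative.toAdd (x : BSAmbient k hk).right|) :
    boxElem hk n p * x ∈ folnerSet hk n := by
  set w := Multiplicative.toAdd (x : BSAmbient k hk).right
  obtain ⟨r, j⟩ := p
  simp only [marginBox, Finset.mem_product, Finset.mem_Ico] at hp
  obtain ⟨⟨hr₁, hr₂⟩, hj₁, hj₂⟩ := hp
  lift j to ℕ using (abs_nonneg w).trans hj₁
  have hjn : j ≤ n := by linarith [abs_nonneg w]
  have hshift := abs_le.mp <| show |(k : ℤ) ^ (n + j - v) * b| ≤ k ^ (2 * n) * |b| by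
    rw [abs_mul, abs_pow, Nat.abs_cast]
    exact mul_le_mul_of_nonneg_right (pow_le_pow_right₀ (by omega) (by omega)) (abs_nonneg b)
  rw [boxElem_mul hv hx, folnerSet]
  refine Finset.mem_image_of_mem _ ?_
  simp only [marginBox, Finset.mem_product, Finset.mem_Ico, sub_zero]
  have := le_abs_self w
  have := neg_abs_le w
  exact ⟨⟨by linarith, by linarith⟩, by linarith, by linarith⟩

lemma ncard_symmDiff_folnerSet_le {n v : ℕ} (hv : v ≤ n) {b : ℤ} {x : BS k hk}
    (hx : Multiplicative.toAdd (x : BSAmbient k hk).left = b / (k : ℚ) ^ v) (hb : 2 * |b| ≤ n)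
    (hw : 2 * |Multiplicative.toAdd (x : BSAmbient k hk).right| ≤ n) :
    ((symmDiff ((· * x) '' (folnerSet hk n : Set (BS k hk))) (folnerSet hk n)).ncard : ℤ) ≤
      4 * (|b| + |Multiplicative.toAdd (x : BSAmbient k hk).right|) * k ^ (3 * n + 3) := by
  set w := Multiplicative.toAdd (x : BSAmbient k hk).right
  set L : ℤ := (k : ℤ) ^ (3 * n + 3)
  set C : ℤ := (k : ℤ) ^ (2 * n) * |b|
  have hkn : (n : ℤ) + 1 ≤ (k : ℤ) ^ (n + 3) := by
    exact_mod_cast (Nat.lt_pow_self (n := n + 3) (by omega)).le.trans' (by omega)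
  have hL : L = (k : ℤ) ^ (2 * n) * (k : ℤ) ^ (n + 3) := by
    rw [← pow_add]; exact congrArg _ (by ring)
  have hk2n : 0 < (k : ℤ) ^ (2 * n) := by positivity
  have hC : 0 ≤ C := by positivity
  have hCL : 2 * C ≤ L := by rw [hL]; nlinarith
  have hCn : C * (n + 1) ≤ |b| * L := by rw [hL]; nlinarith [abs_nonneg b]
  set S := (marginBox L (n + 1) C |w|).image (boxElem hk n)
  have hSF : S ⊆ folnerSet hk n :=
    Finset.image_subset_image (marginBox_subset_marginBox hC (abs_nonneg w))
  have hSx : (· * x) '' (S : Set (BS k hk)) ⊆ folnerSet hk n := by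
    rintro _ ⟨_, hg, rfl⟩
    obtain ⟨p, hp, rfl⟩ := Finset.mem_image.mp hg
    exact boxElem_mul_mem_folnerSet hv hx hp
  have hsymm := ncard_symmDiff_image_mul_right_add_le (Finset.finite_toSet _)
    (Finset.coe_subset.mpr hSF) hSx
  have hbox := card_marginBox_zero_sub_card_le hC (abs_nonneg w) hCL (by omega : 2 * |w| ≤ n + 1)
  have hF : (folnerSet hk n).card = (marginBox L (n + 1) 0 0).card :=
    Finset.card_image_of_injective _ (boxElem_injective hk n)
  rw [Set.ncard_coe_finset, Set.ncard_coe_finset, hF,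
    Finset.card_image_of_injective _ (boxElem_injective hk n)] at hsymm
  linarith

end BS

/-- Let `k ≥ 2` and `G = BS(1,k) = ℤ[1/k] ⋊_φ ℤ`.  There is a sequence
`(F_n)` of nonempty finite subsets of `G` which is a right Følner sequence
(`|F_n·x △ F_n|/|F_n| → 0` for every `x ∈ G`) and satisfies `c(F_n) = |F_n|` for every `n`;
in particular the conjugacy ratio of `G` with respect to `(F_n)` is `1`. -/
theorem bs_right_folner_conjugacy_ratio_one (k : ℕ) (hk : 2 ≤ k) :
    ∃ F : ℕ → Set ↥(BS k hk),
      (∀ n, (F n).Finite ∧ (F n).Nonempty) ∧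
      (∀ x : ↥(BS k hk),
        Filter.Tendsto
          (fun n => (((symmDiff ((fun y => y * x) '' F n) (F n)).ncard : ℝ)) / ((F n).ncard : ℝ))
          Filter.atTop (nhds 0)) ∧
      (∀ n, (ConjClasses.mk '' F n).ncard = (F n).ncard) := by
  refine ⟨fun n => (BS.folnerSet hk n : Set (BS k hk)), fun n => ⟨Finset.finite_toSet _, ?_⟩,
    fun x => ?_, fun n => (BS.injOn_conjClassesMk_folnerSet hk n).ncard_image⟩
  · exact Finset.coe_nonempty.mpr (Finset.card_pos.mp (by rw [BS.card_folnerSet]; positivity))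
  obtain ⟨b, v, hx⟩ := exists_eq_intCast_div_pow_of_mem_zOneOver (by omega) x.2
  set w := Multiplicative.toAdd (x : BSAmbient k hk).right
  have hlim : Filter.Tendsto (fun n : ℕ => 4 * (|b| + |w| : ℝ) * (1 / (n + 1))) Filter.atTop
      (nhds 0) := by
    simpa using tendsto_one_div_add_atTop_nhds_zero_nat.const_mul (4 * (|b| + |w| : ℝ))
  refine squeeze_zero' (Filter.Eventually.of_forall fun n => by positivity) ?_ hlim
  filter_upwards [Filter.eventually_ge_atTop v,
    tendsto_natCast_atTop_atTop.eventually_ge_atTop (2 * |b|),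
    tendsto_natCast_atTop_atTop.eventually_ge_atTop (2 * |w|)] with n hv hb hw
  have hΔ : ((symmDiff ((· * x) '' (BS.folnerSet hk n : Set (BS k hk)))
      (BS.folnerSet hk n)).ncard : ℝ) ≤ 4 * (|b| + |w|) * (k ^ (3 * n + 3) : ℕ) := by
    exact_mod_cast BS.ncard_symmDiff_folnerSet_le hv hx hb hw
  rw [Set.ncard_coe_finset, BS.card_folnerSet, Nat.cast_mul]
  calc _ ≤ 4 * (|b| + |w|) * (k ^ (3 * n + 3) : ℕ) / ((k ^ (3 * n + 3) : ℕ) * ((n + 1 : ℕ) : ℝ)) :=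
        div_le_div_of_nonneg_right hΔ (by positivity)
    _ = _ := by field_simp; push_cast; ring
end
end

section
/- Let G = K ⋊_φ ⟨t⟩ be a finitely generated abelian-by-cyclic group and let f : ℕ → ℝ≥0 be a function with f(r) → ∞. For r ∈ ℕ let U_f(r) be the set of elements of G of the form t^{-p}·u₀·t·u₁·t·⋯·u_{d-1}·t·u_d·t^{-q}·t^m where p, q ≥ 0, d = p + q ≤ f(r), 0 ≤ m ≤ r, and each u_i is a sum of at most r elements of R. Then there exist C > 0 and r₀ such that |U_f(r)| ≤ r^{C·f(r)} for all r ≥ r₀. -/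
open scoped Pointwise

/-!
Since `K` is abelian, a product of at most `r` elements of `R` is determined by how often each
element of `R` occurs, so there are at most `(r + 1)^|R|` such products. An element of `U_f(r)` is
then determined by `p, q ≤ f(r)`, `m ≤ r` and the `p + q + 1 ≤ f(r) + 1` blocks `uᵢ`, giving at most
`(f(r) + 1)² (r + 1)^(1 + |R| (f(r) + 1))` elements, which is `r^{O(f(r))}` once `f(r) ≥ 1`.
-/

theorem Set.ncard_le_card_of_subset_range {α β : Type*} [Finite α] {f : α → β} {s : Set β}
    (h : s ⊆ Set.range f) : s.ncard ≤ Nat.card α :=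
  calc s.ncard ≤ (Set.range f).ncard := Set.ncard_le_ncard h (Set.finite_range f)
    _ = Nat.card (Set.range f) := (Nat.card_coe_set_eq _).symm
    _ ≤ Nat.card α := Finite.card_range_le f

section BoundedProds

variable {M : Type*} [CommMonoid M]

def boundedProds (R : Set M) (r : ℕ) : Set M :=
  {g | ∃ l : List M, l.length ≤ r ∧ (∀ x ∈ l, x ∈ R) ∧ l.prod = g}

theorem boundedProds_subset_range {R : Set M} (hR : R.Finite) (r : ℕ) :
    boundedProds R r ⊆
      Set.range (fun c : hR.toFinset → Fin (r + 1) => ∏ x : hR.toFinset, (x : M) ^ (c x : ℕ)) := by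
  classical
  rintro g ⟨l, hlen, hlR, rfl⟩
  refine ⟨fun x => ⟨l.count (x : M), Nat.lt_succ_of_le (List.count_le_length.trans hlen)⟩, ?_⟩
  rw [Finset.prod_list_count_of_subset l hR.toFinset fun x hx =>
    hR.mem_toFinset.mpr (hlR x (List.mem_toFinset.mp hx))]
  exact Finset.prod_coe_sort hR.toFinset fun x => x ^ l.count x

theorem boundedProds_finite {R : Set M} (hR : R.Finite) (r : ℕ) : (boundedProds R r).Finite :=
  (Set.finite_range _).subset (boundedProds_subset_range hR r)

theorem ncard_boundedProds_le {R : Set M} (hR : R.Finite) (r : ℕ) :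
    (boundedProds R r).ncard ≤ (r + 1) ^ R.ncard := by
  have := Set.ncard_le_card_of_subset_range (boundedProds_subset_range hR r)
  rwa [Nat.card_fun, Nat.card_eq_fintype_card, Nat.card_eq_fintype_card, Fintype.card_coe,
    Fintype.card_fin, ← Set.ncard_eq_toFinset_card R hR] at this

end BoundedProds

section NormalForm

variable {K : Type*} [CommGroup K] (φ : MulAut K)

/-- The element `t^{-p} u₀ t u₁ t ⋯ u_{p+q-1} t u_{p+q} t^{-q} t^m`. -/
def normalForm (p q m : ℕ) (u : ℕ → K) : K ⋊[zpowersHom (MulAut K) φ] Multiplicative ℤ :=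
  SemidirectProduct.inr (Multiplicative.ofAdd (-(p : ℤ))) *
    ((List.range (p + q)).map (fun i =>
      SemidirectProduct.inl (u i) *
        SemidirectProduct.inr (Multiplicative.ofAdd (1 : ℤ)))).prod *
    SemidirectProduct.inl (u (p + q)) *
    SemidirectProduct.inr (Multiplicative.ofAdd (-(q : ℤ))) *
    SemidirectProduct.inr (Multiplicative.ofAdd (m : ℤ))

theorem normalForm_congr (p q m : ℕ) {u u' : ℕ → K} (h : ∀ i ≤ p + q, u i = u' i) :
    normalForm φ p q m u = normalForm φ p q m u' := by
  unfold normalForm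
  rw [h (p + q) le_rfl,
    List.map_congr_left fun i hi => by rw [h i (List.mem_range.mp hi).le]]

def normalForms (n r : ℕ) (B : Set K) : Set (K ⋊[zpowersHom (MulAut K) φ] Multiplicative ℤ) :=
  {g | ∃ (p q m : ℕ) (u : ℕ → K), p + q ≤ n ∧ m ≤ r ∧ (∀ i ≤ p + q, u i ∈ B) ∧
    g = normalForm φ p q m u}

theorem normalForms_subset_range (n r : ℕ) (B : Set K) :
    normalForms φ n r B ⊆ Set.range
      (fun a : Fin (n + 1) × Fin (n + 1) × Fin (r + 1) × (Fin (n + 1) → B) =>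
        normalForm φ a.1 a.2.1 a.2.2.1 fun i => if h : i < n + 1 then a.2.2.2 ⟨i, h⟩ else 1) := by
  rintro g ⟨p, q, m, u, hpq, hm, huB, rfl⟩
  refine ⟨(⟨p, by omega⟩, ⟨q, by omega⟩, ⟨m, by omega⟩,
    fun i => if h : (i : ℕ) ≤ p + q then ⟨u i, huB i h⟩ else ⟨u 0, huB 0 (Nat.zero_le _)⟩), ?_⟩
  refine normalForm_congr φ p q m fun i hi => ?_
  simp [hi, show ¬n < i by omega]

theorem normalForms_finite (n r : ℕ) {B : Set K} (hB : B.Finite) :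
    (normalForms φ n r B).Finite :=
  have : Finite B := hB
  (Set.finite_range _).subset (normalForms_subset_range φ n r B)

theorem ncard_normalForms_le (n r : ℕ) {B : Set K} (hB : B.Finite) :
    (normalForms φ n r B).ncard ≤ (n + 1) * (n + 1) * (r + 1) * B.ncard ^ (n + 1) := by
  have : Finite B := hB
  refine (Set.ncard_le_card_of_subset_range (normalForms_subset_range φ n r B)).trans_eq ?_
  simp [Nat.card_fun, Nat.card_coe_set_eq, mul_assoc]

end NormalForm

theorem succ_sq_mul_succ_pow_le_pow {n r k : ℕ} (hr : 2 ≤ r) :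
    (n + 1) * (n + 1) * (r + 1) * ((r + 1) ^ k) ^ (n + 1) ≤ r ^ (2 * (k + 3) * (n + 1)) := by
  have hn : n + 1 ≤ (r + 1) ^ (n + 1) :=
    (Nat.lt_two_pow_self).le.trans (Nat.pow_le_pow_left (by omega) _)
  have hr1 : r + 1 ≤ (r + 1) ^ (n + 1) := Nat.le_self_pow (by omega) _
  calc (n + 1) * (n + 1) * (r + 1) * ((r + 1) ^ k) ^ (n + 1)
      ≤ (r + 1) ^ (n + 1) * (r + 1) ^ (n + 1) * (r + 1) ^ (n + 1) * ((r + 1) ^ k) ^ (n + 1) := by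
        gcongr
    _ = (r + 1) ^ ((k + 3) * (n + 1)) := by ring
    _ ≤ (r ^ 2) ^ ((k + 3) * (n + 1)) := Nat.pow_le_pow_left (by nlinarith) _
    _ = r ^ (2 * (k + 3) * (n + 1)) := by rw [← pow_mul, mul_assoc]

theorem card_few_t_elements_le_general
    {K : Type*} [CommGroup K] (φ : MulAut K)
    (R : Set K) (hRfin : R.Finite)
    (f : ℕ → ℝ) (hf : Filter.Tendsto f Filter.atTop Filter.atTop)
    (U : ℕ → Set (K ⋊[zpowersHom (MulAut K) φ] Multiplicative ℤ))
    (hU : ∀ r : ℕ, U r =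
      {g : K ⋊[zpowersHom (MulAut K) φ] Multiplicative ℤ |
        ∃ (p q m : ℕ) (u : ℕ → K),
          ((p + q : ℕ) : ℝ) ≤ f r ∧ m ≤ r ∧
          (∀ i ≤ p + q, ∃ l : List K, l.length ≤ r ∧ (∀ x ∈ l, x ∈ R) ∧ l.prod = u i) ∧
          g = SemidirectProduct.inr (Multiplicative.ofAdd (-(p : ℤ))) *
              ((List.range (p + q)).map (fun i =>
                SemidirectProduct.inl (u i) *
                  SemidirectProduct.inr (Multiplicative.ofAdd (1 : ℤ)))).prod *
              SemidirectProduct.inl (u (p + q)) *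
              SemidirectProduct.inr (Multiplicative.ofAdd (-(q : ℤ))) *
              SemidirectProduct.inr (Multiplicative.ofAdd (m : ℤ))}) :
    ∃ (C : ℝ) (r₀ : ℕ), 0 < C ∧ ∀ r : ℕ, r₀ ≤ r →
      ((U r).ncard : ℝ) ≤ (r : ℝ) ^ (C * f r) := by
  obtain ⟨r₁, hr₁⟩ := Filter.eventually_atTop.mp (hf.eventually_ge_atTop 1)
  set k := R.ncard
  refine ⟨4 * (k + 3), max r₁ 2, by positivity, fun r hr => ?_⟩
  have hf1 : 1 ≤ f r := hr₁ r (le_of_max_le_left hr)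
  set n := ⌊f r⌋₊
  have hsub : U r ⊆ normalForms φ n r (boundedProds R r) := by
    rw [hU r]
    rintro g ⟨p, q, m, u, hpq, hm, hu, rfl⟩
    exact ⟨p, q, m, u, Nat.le_floor hpq, hm, hu, rfl⟩
  have hcard : (U r).ncard ≤ r ^ (2 * (k + 3) * (n + 1)) :=
    calc (U r).ncard ≤ (normalForms φ n r (boundedProds R r)).ncard :=
          Set.ncard_le_ncard hsub (normalForms_finite φ n r (boundedProds_finite hRfin r))
      _ ≤ (n + 1) * (n + 1) * (r + 1) * ((r + 1) ^ k) ^ (n + 1) :=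
          (ncard_normalForms_le φ n r (boundedProds_finite hRfin r)).trans
            (by gcongr; exact ncard_boundedProds_le hRfin r)
      _ ≤ r ^ (2 * (k + 3) * (n + 1)) := succ_sq_mul_succ_pow_le_pow (le_of_max_le_right hr)
  have hexp : ((2 * (k + 3) * (n + 1) : ℕ) : ℝ) ≤ 4 * (k + 3) * f r := by
    have hn : (n : ℝ) ≤ f r := Nat.floor_le (by linarith)
    push_cast
    nlinarith
  calc ((U r).ncard : ℝ) ≤ (r : ℝ) ^ ((2 * (k + 3) * (n + 1) : ℕ) : ℝ) := by
        rw [Real.rpow_natCast]; exact_mod_cast hcard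
    _ ≤ (r : ℝ) ^ (4 * (k + 3) * f r) :=
        Real.rpow_le_rpow_of_exponent_le (mod_cast (le_of_max_le_right hr).trans' one_le_two) hexp

/-- Let `G = K ⋊_φ ⟨t⟩` be a finitely generated abelian-by-cyclic group
(`K` abelian, written multiplicatively, `t` acting by `φ`), with
`S = {(r,1) : r ∈ R} ∪ {(1,t),(1,t⁻¹)}` for a finite symmetric subset `R` of `K` containing the
identity, and let `f : ℕ → ℝ≥0` with `f(r) → ∞`.  For `r ∈ ℕ` let `U_f(r)` be the set of
elements of `G` of the form `t^{-p}·u₀·t·u₁·t·⋯·u_{d-1}·t·u_d·t^{-q}·t^m` with `p, q ≥ 0`,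
`d = p + q ≤ f(r)`, `0 ≤ m ≤ r`, and each `uᵢ` a product of at most `r` elements of `R`.
Then there are `C > 0` and `r₀` with `|U_f(r)| ≤ r^{C·f(r)}` for all `r ≥ r₀`. -/
theorem card_few_t_elements_le
    {K : Type*} [CommGroup K] (φ : MulAut K)
    (R : Set K) (hRfin : R.Finite) (hRsymm : R⁻¹ = R) (hR1 : (1 : K) ∈ R)
    (S : Set (K ⋊[zpowersHom (MulAut K) φ] Multiplicative ℤ))
    (hS : S = (⇑(SemidirectProduct.inl) '' R) ∪
        {SemidirectProduct.inr (Multiplicative.ofAdd (1 : ℤ)),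
         SemidirectProduct.inr (Multiplicative.ofAdd (-1 : ℤ))})
    (hSgen : Subgroup.closure S = ⊤)
    (f : ℕ → ℝ) (hf0 : ∀ r, 0 ≤ f r) (hf : Filter.Tendsto f Filter.atTop Filter.atTop)
    (U : ℕ → Set (K ⋊[zpowersHom (MulAut K) φ] Multiplicative ℤ))
    (hU : ∀ r : ℕ, U r =
      {g : K ⋊[zpowersHom (MulAut K) φ] Multiplicative ℤ |
        ∃ (p q m : ℕ) (u : ℕ → K),
          ((p + q : ℕ) : ℝ) ≤ f r ∧ m ≤ r ∧
          (∀ i ≤ p + q, ∃ l : List K, l.length ≤ r ∧ (∀ x ∈ l, x ∈ R) ∧ l.prod = u i) ∧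
          g = SemidirectProduct.inr (Multiplicative.ofAdd (-(p : ℤ))) *
              ((List.range (p + q)).map (fun i =>
                SemidirectProduct.inl (u i) *
                  SemidirectProduct.inr (Multiplicative.ofAdd (1 : ℤ)))).prod *
              SemidirectProduct.inl (u (p + q)) *
              SemidirectProduct.inr (Multiplicative.ofAdd (-(q : ℤ))) *
              SemidirectProduct.inr (Multiplicative.ofAdd (m : ℤ))}) :
    ∃ (C : ℝ) (r₀ : ℕ), 0 < C ∧ ∀ r : ℕ, r₀ ≤ r →
      ((U r).ncard : ℝ) ≤ (r : ℝ) ^ (C * f r) :=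
  card_few_t_elements_le_general φ R hRfin f hf U hU
end

section
/- Let R be a ring, let M be a Noetherian R-module, and let φ : M → M be an R-module automorphism. Then there exists N ≥ 1 such that every periodic point of φ has period dividing N; that is, for every x ∈ M, if φⁿ(x) = x for some integer n ≥ 1, then φᴺ(x) = x. -/
/-! The submodules `Fix(f ^ n)`, `n ≥ 1`, of a Noetherian module have a maximal member `Fix(f ^ N)`.
If `x` has period `n`, then `Fix(f ^ N) ≤ Fix(f ^ (N * n))`, so the two are equal by maximality,
and `x ∈ Fix(f ^ (N * n)) = Fix(f ^ N)`. -/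

open Function

namespace Module.End

variable {R M : Type*} [Semiring R] [AddCommMonoid M] [Module R M]

def periodicPtsSubmodule (f : Module.End R M) (n : ℕ) : Submodule R M :=
  LinearMap.eqLocus (f ^ n) 1

theorem mem_periodicPtsSubmodule {f : Module.End R M} {n : ℕ} {x : M} :
    x ∈ f.periodicPtsSubmodule n ↔ IsPeriodicPt f n x := by
  rw [periodicPtsSubmodule, LinearMap.mem_eqLocus, pow_apply]
  rfl

theorem periodicPtsSubmodule_mono_of_dvd (f : Module.End R M) {m n : ℕ} (h : m ∣ n) :
    f.periodicPtsSubmodule m ≤ f.periodicPtsSubmodule n := fun _ hx ↦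
  mem_periodicPtsSubmodule.2 ((mem_periodicPtsSubmodule.1 hx).trans_dvd h)

theorem exists_common_period [IsNoetherian R M] (f : Module.End R M) :
    ∃ N, 0 < N ∧ ∀ x n, 0 < n → IsPeriodicPt f n x → IsPeriodicPt f N x := by
  obtain ⟨_, ⟨N, hN, rfl⟩, hmax⟩ := set_has_maximal_iff_noetherian.2 ‹_›
    (f.periodicPtsSubmodule '' {n | 0 < n}) ⟨_, 1, Nat.one_pos, rfl⟩
  refine ⟨N, hN, fun x n hn hx ↦ ?_⟩
  have hle := f.periodicPtsSubmodule_mono_of_dvd (dvd_mul_right N n)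
  have heq : f.periodicPtsSubmodule N = f.periodicPtsSubmodule (N * n) :=
    hle.eq_of_not_lt (hmax _ ⟨N * n, Nat.mul_pos hN hn, rfl⟩)
  exact mem_periodicPtsSubmodule.1 <|
    heq ▸ mem_periodicPtsSubmodule.2 (hx.const_mul N)

end Module.End

/-- Let `R` be a ring, `M` a Noetherian `R`-module and `φ : M ≃ₗ[R] M`
an `R`-module automorphism. Then there exists `N ≥ 1` such that every periodic point of `φ`
has period dividing `N`: if `φⁿ x = x` for some `n ≥ 1`, then `φᴺ x = x`. -/
theorem bounded_period_of_noetherian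
    {R M : Type*} [Ring R] [AddCommGroup M] [Module R M] [IsNoetherian R M]
    (φ : M ≃ₗ[R] M) :
    ∃ N : ℕ, 1 ≤ N ∧ ∀ x : M, (∃ n : ℕ, 1 ≤ n ∧ (φ ^ n) x = x) → (φ ^ N) x = x := by
  obtain ⟨N, hN, hper⟩ := Module.End.exists_common_period (φ : Module.End R M)
  refine ⟨N, hN, fun x ⟨n, hn, hx⟩ ↦ ?_⟩
  rw [LinearEquiv.pow_apply] at hx ⊢
  exact hper x n hn hx
end

section
/- Let K be an abelian group and φ ∈ Aut(K), and suppose there is a finite subset R₀ ⊆ K such that K is generated as a group by {φⁱ(r) : i ∈ ℤ, r ∈ R₀}. Then the set of periodic points P_φ = {a ∈ K : φⁿ(a) = a for some n ≥ 1} is a finitely generated subgroup of K, and φ(P_φ) = P_φ. -/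
/-!
Let `t` act on `K` through `φ`; this makes `K` a module over the Laurent polynomial ring
`ℤ[t, t⁻¹] = ℤ[ℤ]`, finitely generated by `R₀`. The periodic points form a `ℤ[ℤ]`-submodule, which
is finitely generated since `ℤ[ℤ]` is noetherian. As a group it is then generated by the
`φ`-orbits of finitely many periodic points, and each such orbit is finite.
-/

open Function Set Submodule
open scoped MonoidAlgebra

theorem MonoidAlgebra.span_range_of (k G : Type*) [Semiring k] [MulOneClass G] :
    span k (range (of k G)) = ⊤ := by
  simpa [funext (basis_apply (R := G) k), funext (of_apply k G)] using (basis G k).span_eq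

/-- The key point is that the `A`-span of a set `t` is the `R`-span of `s • t`. -/
theorem Submodule.fg_of_finite_orbits {R A M : Type*} [CommSemiring R] [Semiring A] [Algebra R A]
    [AddCommMonoid M] [Module R M] [Module A M] [IsScalarTower R A M] [IsNoetherian A M]
    {s : Set A} (hs : span R s = ⊤) {W : Submodule R M} (hsW : ∀ a ∈ s, ∀ x ∈ W, a • x ∈ W)
    (hfin : ∀ x ∈ W, ((· • x) '' s).Finite) : W.FG := by
  have hW : (span A (W : Set M)).restrictScalars R = W := by
    refine le_antisymm ?_ fun x hx => subset_span hx
    rw [← span_smul_of_span_eq_top hs, span_le]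
    rintro _ ⟨a, ha, x, hx, rfl⟩
    exact hsW a ha x hx
  obtain ⟨T, hT⟩ := IsNoetherian.noetherian (span A (W : Set M))
  have hTW : (T : Set M) ⊆ W := fun t ht => by
    rw [← hW, ← hT]
    exact subset_span ht
  rw [← hW, ← hT, ← span_smul_of_span_eq_top hs, ← iUnion_smul_right_image]
  exact fg_span (T.finite_toSet.biUnion fun t ht => hfin t (hTW ht))

namespace MonoidHom

variable {G : Type*} [CommGroup G]

def periodicPtsSubgroup (f : G →* G) : Subgroup G where
  carrier := periodicPts f
  one_mem' := ⟨1, one_pos, iterate_map_one f 1⟩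
  mul_mem' := by
    rintro a b ⟨m, hm, ha⟩ ⟨n, hn, hb⟩
    refine ⟨m * n, mul_pos hm hn, ?_⟩
    rw [IsPeriodicPt, IsFixedPt, iterate_map_mul, (ha.mul_const n).eq, (hb.const_mul m).eq]
  inv_mem' := by
    rintro a ⟨n, hn, ha⟩
    exact ⟨n, hn, by rw [IsPeriodicPt, IsFixedPt, iterate_map_inv, ha.eq]⟩

end MonoidHom

namespace MulAut

section Group

variable {K : Type*} [Group K] (φ : MulAut K)

theorem coe_pow (n : ℕ) : ⇑(φ ^ n) = (⇑φ)^[n] := hom_coe_pow _ rfl (fun _ _ => rfl) φ n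

theorem mem_periodicPts_iff {a : K} : a ∈ periodicPts φ ↔ ∃ n : ℕ, 0 < n ∧ (φ ^ n) a = a := by
  simp only [mem_periodicPts, IsPeriodicPt, IsFixedPt, coe_pow, gt_iff_lt]

theorem zpow_apply_mem_periodicPts {a : K} (ha : a ∈ periodicPts φ) (i : ℤ) :
    (φ ^ i) a ∈ periodicPts φ := by
  obtain ⟨n, hn, h⟩ := ha
  refine ⟨n, hn, h.map fun x => ?_⟩
  rw [← mul_apply, ← mul_apply, ((Commute.refl φ).zpow_left i).eq]

theorem finite_range_zpow_apply {a : K} (ha : a ∈ periodicPts φ) :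
    (range fun i : ℤ => (φ ^ i) a).Finite := by
  have hpos : 0 < minimalPeriod φ a := minimalPeriod_pos_of_mem_periodicPts ha
  refine ((finite_Ico 0 (minimalPeriod φ a : ℤ)).image fun i => (φ ^ i) a).subset ?_
  rintro _ ⟨i, rfl⟩
  refine ⟨i % minimalPeriod φ a, ⟨Int.emod_nonneg _ (by omega), Int.emod_lt_of_pos _ (by omega)⟩, ?_⟩
  exact MulAction.zpow_smul_mod_minimalPeriod φ a i

end Group

variable {K : Type*} [CommGroup K] (φ : MulAut K)

noncomputable def zpowersRep : Representation ℤ (Multiplicative ℤ) (Additive K) :=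
  (Representation.ofMulDistribMulAction (MulAut K) K).comp (zpowersHom (MulAut K) φ)

theorem periodicPtsSubgroup_fg {R₀ : Set K} (hR₀ : R₀.Finite)
    (hgen : Subgroup.closure {x : K | ∃ (i : ℤ) (r : K), r ∈ R₀ ∧ x = (φ ^ i) r} = ⊤) :
    (φ : K →* K).periodicPtsSubgroup.FG := by
  let _ : Module ℤ[Multiplicative ℤ] (Additive K) :=
    Module.compHom _ (zpowersRep φ).asAlgebraHom.toRingHom
  have of_smul (i : ℤ) (x : K) : MonoidAlgebra.of ℤ _ (Multiplicative.ofAdd i) • Additive.ofMul x =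
      Additive.ofMul ((φ ^ i) x) := by
    show (zpowersRep φ).asAlgebraHom _ _ = _
    rw [Representation.asAlgebraHom_of]
    rfl
  have hspan : span ℤ[Multiplicative ℤ] (Additive.ofMul '' R₀) = ⊤ := by
    refine eq_top_iff.2 fun x _ => Subgroup.closure_induction
      (p := fun y _ => Additive.ofMul y ∈ span _ (Additive.ofMul '' R₀)) ?_ (zero_mem _)
      (fun _ _ _ _ => add_mem) (fun _ _ => neg_mem) (hgen ▸ Subgroup.mem_top x.toMul)
    rintro _ ⟨i, r, hr, rfl⟩
    rw [← of_smul]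
    exact smul_mem _ _ (subset_span (mem_image_of_mem _ hr))
  have : Module.Finite ℤ[Multiplicative ℤ] (Additive K) :=
    ⟨⟨(hR₀.image _).toFinset, by rw [Finite.coe_toFinset, hspan]⟩⟩
  have : IsNoetherianRing ℤ[Multiplicative ℤ] := Algebra.FiniteType.isNoetherianRing ℤ _
  rw [Subgroup.fg_iff_add_fg]
  refine (fg_iff_addSubgroup_fg (φ : K →* K).periodicPtsSubgroup.toAddSubgroup.toIntSubmodule).1
    (fg_of_finite_orbits (MonoidAlgebra.span_range_of ℤ (Multiplicative ℤ)) ?_ ?_)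
  · rintro _ ⟨i, rfl⟩ x hx
    exact of_smul i.toAdd x.toMul ▸ zpow_apply_mem_periodicPts φ hx _
  · intro x hx
    refine ((finite_range_zpow_apply φ hx).image Additive.ofMul).subset ?_
    rintro _ ⟨_, ⟨i, rfl⟩, rfl⟩
    exact ⟨_, ⟨i.toAdd, rfl⟩, (of_smul i.toAdd x.toMul).symm⟩

end MulAut

/-- Let `K` be an abelian group (written multiplicatively), `φ` an automorphism
of `K`, and suppose `K` is generated by `{φⁱ(r) : i ∈ ℤ, r ∈ R₀}` for some finite `R₀ ⊆ K`.
Then the set `P_φ` of periodic points of `φ` is (the underlying set of) a finitely generated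
subgroup of `K`, and `φ(P_φ) = P_φ`. -/
theorem periodicPoints_fg_and_invariant
    {K : Type*} [CommGroup K] (φ : MulAut K) (R₀ : Set K) (hR₀ : R₀.Finite)
    (hgen : Subgroup.closure {x : K | ∃ (i : ℤ) (r : K), r ∈ R₀ ∧ x = (φ ^ i) r} = ⊤) :
    ∃ P : Subgroup K,
      (P : Set K) = {a : K | ∃ n : ℕ, 1 ≤ n ∧ (φ ^ n) a = a} ∧
      P.FG ∧ ⇑φ '' (P : Set K) = (P : Set K) :=
  ⟨(φ : K →* K).periodicPtsSubgroup, ext fun _ => φ.mem_periodicPts_iff,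
    φ.periodicPtsSubgroup_fg hR₀ hgen, (bijOn_periodicPts φ).image_eq⟩
end

section
/- Let Q ∈ GL_n(ℚ), let K be the additive subgroup of ℚⁿ generated by ⋃_{i∈ℤ} Qⁱ(ℤⁿ), and let G = K ⋊_Q ℤ, where the generator t of ℤ acts on K by Q. Let P_Q = {v ∈ K : Qᵐv = v for some m ≥ 1} (a finitely generated group). Let R be a finite symmetric subset of K such that S = {(r,1) : r ∈ R} ∪ {(0,t),(0,t⁻¹)} generates G, and let X be a finite symmetric generating set of P_Q containing the identity. Then P_Q is at most polynomially distorted in G: there exist constants C and d such that Δ_G^{P_Q}(r) ≤ C·rᵈ for all r ≥ 1. -/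
/-!
Write `h ∈ P_Q` with `|h|_S ≤ r` as a word in `S`: its `K`-coordinate is a sum of at most `r`
vectors `Qⁱ v` with `|i| ≤ r` and `v` in the finite set `R`. As `P_Q` is finitely generated,
one power `Qᴹ` fixes all of it. The Fitting decomposition `ℚⁿ = ker (Qᴹ - 1)ᵉ ⊕ im (Qᴹ - 1)ᵉ`
gives a projection `π` that commutes with `Q` and fixes `P_Q`; on its image `Qᴹ` is unipotent,
so `‖Qⁱ (π v)‖` grows only polynomially in `|i|`. Applying `π` termwise bounds the
`K`-coordinate of `h` polynomially in `r`. Finally `P_Q` sits in `ℚⁿ` as a lattice whose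
coordinates in a `ℤ`-basis are restrictions of linear forms on `ℚⁿ`, so `|h|_X` is at most
linear in the norm of that coordinate.
-/

open scoped Pointwise

noncomputable section

/-- The generating set `⋃_{i ∈ ℤ} Qⁱ(ℤⁿ) ⊆ ℚⁿ`. -/
def KQgen (n : ℕ) (Q : GL (Fin n) ℚ) : Set (Fin n → ℚ) :=
  {x | ∃ (i : ℤ) (v : Fin n → ℤ),
    x = ((Q ^ i : GL (Fin n) ℚ) : Matrix (Fin n) (Fin n) ℚ).mulVec (fun j => (v j : ℚ))}

/-- `K = ⟨Qⁱ(ℤⁿ) : i ∈ ℤ⟩`, as an additive subgroup of `ℚⁿ`. -/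
def KQ (n : ℕ) (Q : GL (Fin n) ℚ) : AddSubgroup (Fin n → ℚ) :=
  AddSubgroup.closure (KQgen n Q)

/-- `Q` as an additive automorphism of `ℚⁿ`. -/
def QAddAut (n : ℕ) (Q : GL (Fin n) ℚ) : AddAut (Fin n → ℚ) where
  toFun x := ((Q : Matrix (Fin n) (Fin n) ℚ)).mulVec x
  invFun x := ((Q⁻¹ : GL (Fin n) ℚ) : Matrix (Fin n) (Fin n) ℚ).mulVec x
  left_inv x := by
    show ((Q⁻¹ : GL (Fin n) ℚ) : Matrix (Fin n) (Fin n) ℚ).mulVec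
      (((Q : Matrix (Fin n) (Fin n) ℚ)).mulVec x) = x
    rw [Matrix.mulVec_mulVec, ← Units.val_mul, inv_mul_cancel, Units.val_one,
      Matrix.one_mulVec]
  right_inv x := by
    show ((Q : Matrix (Fin n) (Fin n) ℚ)).mulVec
      (((Q⁻¹ : GL (Fin n) ℚ) : Matrix (Fin n) (Fin n) ℚ).mulVec x) = x
    rw [Matrix.mulVec_mulVec, ← Units.val_mul, mul_inv_cancel, Units.val_one,
      Matrix.one_mulVec]
  map_add' x y := Matrix.mulVec_add _ x y

/-- `Q` as a multiplicative automorphism of `Multiplicative ℚⁿ`. -/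
def QMulAut (n : ℕ) (Q : GL (Fin n) ℚ) : MulAut (Multiplicative (Fin n → ℚ)) :=
  AddEquiv.toMultiplicative (QAddAut n Q)

lemma QMulAut_apply (n : ℕ) (Q : GL (Fin n) ℚ) (y : Multiplicative (Fin n → ℚ)) :
    Multiplicative.toAdd (QMulAut n Q y) =
      ((Q : Matrix (Fin n) (Fin n) ℚ)).mulVec (Multiplicative.toAdd y) := rfl

lemma QMulAut_inv_apply (n : ℕ) (Q : GL (Fin n) ℚ) (y : Multiplicative (Fin n → ℚ)) :
    Multiplicative.toAdd ((QMulAut n Q)⁻¹ y) =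
      ((Q⁻¹ : GL (Fin n) ℚ) : Matrix (Fin n) (Fin n) ℚ).mulVec (Multiplicative.toAdd y) := rfl

lemma QMulAut_zpow (n : ℕ) (Q : GL (Fin n) ℚ) (i : ℤ) :
    ∀ y : Multiplicative (Fin n → ℚ),
      Multiplicative.toAdd ((QMulAut n Q ^ i) y) =
        ((Q ^ i : GL (Fin n) ℚ) : Matrix (Fin n) (Fin n) ℚ).mulVec (Multiplicative.toAdd y) := by
  induction i using Int.induction_on with
  | zero => intro y; simp [Matrix.one_mulVec]
  | succ m ih =>
      intro y
      rw [zpow_add_one, MulAut.mul_apply, ih, QMulAut_apply, Matrix.mulVec_mulVec,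
        ← Units.val_mul, ← zpow_add_one]
  | pred m ih =>
      intro y
      rw [zpow_sub_one, MulAut.mul_apply, ih, QMulAut_inv_apply, Matrix.mulVec_mulVec,
        ← Units.val_mul, ← zpow_sub_one]

lemma KQ_smul (n : ℕ) (Q : GL (Fin n) ℚ) (i : ℤ) {x : Fin n → ℚ} (hx : x ∈ KQ n Q) :
    ((Q ^ i : GL (Fin n) ℚ) : Matrix (Fin n) (Fin n) ℚ).mulVec x ∈ KQ n Q := by
  induction hx using AddSubgroup.closure_induction with
  | mem x hx =>
      obtain ⟨j, v, rfl⟩ := hx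
      exact AddSubgroup.subset_closure
        ⟨i + j, v, by rw [Matrix.mulVec_mulVec, ← Units.val_mul, ← zpow_add]⟩
  | zero => simpa [Matrix.mulVec_zero] using (KQ n Q).zero_mem
  | add x y hx hy ihx ihy =>
      rw [Matrix.mulVec_add]
      exact add_mem ihx ihy
  | neg x hx ihx =>
      rw [Matrix.mulVec_neg]
      exact neg_mem ihx

/-- The ambient group `ℚⁿ ⋊_Q ℤ`. -/
abbrev QAmbient (n : ℕ) (Q : GL (Fin n) ℚ) :=
  Multiplicative (Fin n → ℚ)
    ⋊[zpowersHom (MulAut (Multiplicative (Fin n → ℚ))) (QMulAut n Q)] Multiplicative ℤ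

/-- The group `G = K ⋊_Q ℤ` where `K = ⟨Qⁱ(ℤⁿ) : i ∈ ℤ⟩`, realised as the subgroup of
`ℚⁿ ⋊_Q ℤ` of elements whose first coordinate lies in `K`. -/
def GQ (n : ℕ) (Q : GL (Fin n) ℚ) : Subgroup (QAmbient n Q) where
  carrier := {g | Multiplicative.toAdd g.left ∈ KQ n Q}
  one_mem' := by simpa using (KQ n Q).zero_mem
  mul_mem' := by
    intro a b ha hb
    simp only [Set.mem_setOf_eq, SemidirectProduct.mul_left, toAdd_mul] at *
    refine add_mem ha ?_
    rw [zpowersHom_apply, QMulAut_zpow]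
    exact KQ_smul n Q _ hb
  inv_mem' := by
    intro a ha
    simp only [Set.mem_setOf_eq, SemidirectProduct.inv_left, zpowersHom_apply, toAdd_inv] at *
    rw [QMulAut_zpow, toAdd_inv, Matrix.mulVec_neg]
    exact neg_mem (KQ_smul n Q _ ha)

private lemma mulVec_pow_fix {n : ℕ} (P : GL (Fin n) ℚ) {x : Fin n → ℚ}
    (hx : (P : Matrix (Fin n) (Fin n) ℚ).mulVec x = x) :
    ∀ l : ℕ, ((P ^ l : GL (Fin n) ℚ) : Matrix (Fin n) (Fin n) ℚ).mulVec x = x := by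
  intro l
  induction l with
  | zero => simp [Matrix.one_mulVec]
  | succ l ih => rw [pow_succ, Units.val_mul, ← Matrix.mulVec_mulVec, hx, ih]

/-- The periodic points `P_Q = {v ∈ K : Qᵐv = v for some m ≥ 1}`, as a subgroup of
`ℚⁿ ⋊_Q ℤ` (sitting inside the first coordinate). -/
def PQ (n : ℕ) (Q : GL (Fin n) ℚ) : Subgroup (QAmbient n Q) where
  carrier := {g | Multiplicative.toAdd g.left ∈ KQ n Q ∧ g.right = 1 ∧
    ∃ m : ℕ, 1 ≤ m ∧ ((Q ^ m : GL (Fin n) ℚ) : Matrix (Fin n) (Fin n) ℚ).mulVec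
      (Multiplicative.toAdd g.left) = Multiplicative.toAdd g.left}
  one_mem' := by
    refine ⟨by simpa using (KQ n Q).zero_mem, rfl, 1, le_refl 1, ?_⟩
    simp
  mul_mem' := by
    rintro a b ⟨haK, har, m₁, hm₁, hfa⟩ ⟨hbK, hbr, m₂, hm₂, hfb⟩
    have hab : Multiplicative.toAdd (a * b).left =
        Multiplicative.toAdd a.left + Multiplicative.toAdd b.left := by
      rw [SemidirectProduct.mul_left, har, map_one, MulAut.one_apply, toAdd_mul]
    refine ⟨by rw [hab]; exact add_mem haK hbK,
      by rw [SemidirectProduct.mul_right, har, hbr, mul_one],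
      m₁ * m₂, Nat.one_le_iff_ne_zero.2 (by positivity), ?_⟩
    have h1 : ((Q ^ (m₁ * m₂) : GL (Fin n) ℚ) : Matrix (Fin n) (Fin n) ℚ).mulVec
        (Multiplicative.toAdd a.left) = Multiplicative.toAdd a.left := by
      rw [pow_mul]; exact mulVec_pow_fix (Q ^ m₁) hfa m₂
    have h2 : ((Q ^ (m₁ * m₂) : GL (Fin n) ℚ) : Matrix (Fin n) (Fin n) ℚ).mulVec
        (Multiplicative.toAdd b.left) = Multiplicative.toAdd b.left := by
      rw [mul_comm, pow_mul]; exact mulVec_pow_fix (Q ^ m₂) hfb m₁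
    rw [hab, Matrix.mulVec_add, h1, h2]
  inv_mem' := by
    rintro a ⟨haK, har, m, hm, hfa⟩
    have hleft : Multiplicative.toAdd (a⁻¹).left = -(Multiplicative.toAdd a.left) := by
      rw [SemidirectProduct.inv_left, har, inv_one, map_one, MulAut.one_apply, toAdd_inv]
    refine ⟨by rw [hleft]; exact neg_mem haK,
      by rw [SemidirectProduct.inv_right, har, inv_one], m, hm, ?_⟩
    rw [hleft, Matrix.mulVec_neg, hfa]

/-- The element `t = (0, t)` of `G = K ⋊_Q ℤ`. -/
def tQ (n : ℕ) (Q : GL (Fin n) ℚ) : ↥(GQ n Q) :=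
  ⟨⟨1, Multiplicative.ofAdd (1 : ℤ)⟩, by
    show Multiplicative.toAdd (1 : Multiplicative (Fin n → ℚ)) ∈ KQ n Q
    rw [toAdd_one]; exact (KQ n Q).zero_mem⟩

/-- The word length of `g` with respect to a generating set `S` (containing the identity):
the least `n` with `g ∈ Sⁿ`. -/
noncomputable def wordLength {G : Type*} [Group G] (S : Set G) (g : G) : ℕ :=
  sInf {n : ℕ | g ∈ S ^ n}

/-- The distortion function `Δ_G^H(r) = max { |h|_X : h ∈ H, |h|_S ≤ r }` of a subgroup `H`
(with finite generating set `X`) inside `G` (with finite generating set `S`). -/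
noncomputable def distortion {G : Type*} [Group G] (H : Subgroup G) (S X : Set G) (r : ℕ) : ℕ :=
  sSup (wordLength X '' {h : G | h ∈ H ∧ wordLength S h ≤ r})

section WordLength

variable {G : Type*} [Group G] {X : Set G}

@[to_additive]
theorem exists_mem_pow_of_mem_closure (hX : X⁻¹ = X) {g : G} (hg : g ∈ Subgroup.closure X) :
    ∃ k : ℕ, g ∈ X ^ k := by
  induction hg using Subgroup.closure_induction with
  | mem x hx => exact ⟨1, by rwa [pow_one]⟩
  | one => exact ⟨0, by rw [pow_zero]; rfl⟩
  | mul x y _ _ hx hy =>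
    obtain ⟨a, ha⟩ := hx
    obtain ⟨b, hb⟩ := hy
    exact ⟨a + b, by rw [pow_add]; exact Set.mul_mem_mul ha hb⟩
  | inv x _ hx =>
    obtain ⟨a, ha⟩ := hx
    exact ⟨a, by rw [← hX, inv_pow]; exact Set.inv_mem_inv.mpr ha⟩

@[to_additive]
theorem zpow_mem_pow (hX : X⁻¹ = X) {g : G} {k : ℕ} (hg : g ∈ X ^ k) (a : ℤ) :
    g ^ a ∈ X ^ (k * a.natAbs) := by
  obtain ⟨m, rfl | rfl⟩ := Int.eq_nat_or_neg a
  · rw [zpow_natCast, Int.natAbs_natCast, pow_mul]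
    exact Set.pow_mem_pow hg
  · rw [zpow_neg, zpow_natCast, Int.natAbs_neg, Int.natAbs_natCast, pow_mul, ← hX, inv_pow,
      inv_pow]
    exact Set.inv_mem_inv.mpr (Set.pow_mem_pow hg)

theorem wordLength_le_of_mem_pow {g : G} {k : ℕ} (hg : g ∈ X ^ k) : wordLength X g ≤ k :=
  Nat.sInf_le hg

theorem mem_pow_wordLength (hX : X⁻¹ = X) {g : G} (hg : g ∈ Subgroup.closure X) :
    g ∈ X ^ wordLength X g :=
  Nat.sInf_mem (exists_mem_pow_of_mem_closure hX hg)

theorem distortion_le {H : Subgroup G} {S : Set G} {r N : ℕ}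
    (hN : ∀ h ∈ H, wordLength S h ≤ r → wordLength X h ≤ N) : distortion H S X r ≤ N :=
  csSup_le' <| by
    rintro _ ⟨h, ⟨hH, hr⟩, rfl⟩
    exact hN h hH hr

end WordLength

section LinearGrowth

variable {𝕜 : Type*} [NontriviallyNormedField 𝕜] {ι : Type*} [Fintype ι]

theorem LinearMap.exists_bound_of_pi {F : Type*} [SeminormedAddCommGroup F] [NormedSpace 𝕜 F]
    (f : (ι → 𝕜) →ₗ[𝕜] F) : ∃ C, 0 < C ∧ ∀ x, ‖f x‖ ≤ C * ‖x‖ :=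
  SemilinearMapClass.bound_of_continuous f f.continuous_on_pi

theorem Module.End.one_add_pow_apply_eq_sum {R M : Type*} [CommSemiring R] [AddCommMonoid M]
    [Module R M] (N : Module.End R M) {e : ℕ} {x : M} (hx : (N ^ e) x = 0) (q : ℕ) :
    ((1 + N) ^ q) x = ∑ t ∈ Finset.range e, q.choose t • (N ^ t) x := by
  have hvanish : ∀ t ≥ min (q + 1) e, q.choose t • (N ^ t) x = 0 := by
    intro t ht
    rcases min_le_iff.mp ht with hqt | het
    · rw [Nat.choose_eq_zero_of_lt (by omega), zero_smul]
    · rw [← Nat.sub_add_cancel het, pow_add, Module.End.mul_apply, hx, map_zero, smul_zero]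
  rw [add_comm, (Commute.one_right N).add_pow, LinearMap.sum_apply]
  simp only [one_pow, mul_one, Module.End.mul_apply, Module.End.natCast_apply, map_nsmul]
  rw [Finset.eventually_constant_sum hvanish (min_le_left _ _),
    ← Finset.eventually_constant_sum hvanish (min_le_right _ _)]

theorem Module.End.exists_norm_one_add_pow_apply_le (N : Module.End 𝕜 (ι → 𝕜)) (e : ℕ) :
    ∃ C, 0 ≤ C ∧ ∀ x, (N ^ e) x = 0 → ∀ q : ℕ, ‖((1 + N) ^ q) x‖ ≤ C * (q + 1) ^ e * ‖x‖ := by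
  choose C hC0 hC using fun t : ℕ => (N ^ t).exists_bound_of_pi
  refine ⟨∑ t ∈ Finset.range e, C t, Finset.sum_nonneg fun t _ => (hC0 t).le, fun x hx q => ?_⟩
  have hchoose : ∀ t < e, (q.choose t : ℝ) ≤ (q + 1) ^ e := by
    intro t ht
    have : q.choose t ≤ (q + 1) ^ e :=
      (Nat.choose_le_pow q t).trans <| (Nat.pow_le_pow_left q.le_succ t).trans <|
        Nat.pow_le_pow_right q.succ_pos ht.le
    exact_mod_cast this
  rw [N.one_add_pow_apply_eq_sum hx, Finset.sum_mul, Finset.sum_mul]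
  refine (norm_sum_le _ _).trans (Finset.sum_le_sum fun t ht => ?_)
  calc ‖q.choose t • (N ^ t) x‖ ≤ q.choose t * (C t * ‖x‖) :=
        norm_nsmul_le.trans (by gcongr; exact hC t x)
    _ ≤ (q + 1) ^ e * (C t * ‖x‖) := by
        gcongr
        · exact mul_nonneg (hC0 t).le (norm_nonneg x)
        · exact hchoose t (Finset.mem_range.mp ht)
    _ = C t * (q + 1) ^ e * ‖x‖ := by ring

theorem Module.End.exists_norm_pow_apply_le (A : Module.End 𝕜 (ι → 𝕜)) {M : ℕ} (hM : 0 < M)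
    (e : ℕ) : ∃ C, 0 ≤ C ∧ ∀ x, ((A ^ M - 1) ^ e) x = 0 →
      ∀ j : ℕ, ‖(A ^ j) x‖ ≤ C * (j + 1) ^ e * ‖x‖ := by
  obtain ⟨C, hC0, hC⟩ := (A ^ M - 1).exists_norm_one_add_pow_apply_le e
  choose D hD0 hD using fun s : ℕ => (A ^ s).exists_bound_of_pi
  have hDle : ∀ s < M, D s ≤ ∑ s ∈ Finset.range M, D s := fun s hs =>
    Finset.single_le_sum (fun s _ => (hD0 s).le) (Finset.mem_range.mpr hs)
  refine ⟨C * ∑ s ∈ Finset.range M, D s,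
    mul_nonneg hC0 (Finset.sum_nonneg fun s _ => (hD0 s).le), fun x hx j => ?_⟩
  set q := j / M
  set s := j % M
  have hsplit : (A ^ j) x = ((1 + (A ^ M - 1)) ^ q) ((A ^ s) x) := by
    rw [add_sub_cancel, ← Module.End.mul_apply, ← pow_mul, ← pow_add, Nat.div_add_mod]
  have hy : ((A ^ M - 1) ^ e) ((A ^ s) x) = 0 := by
    rw [← Module.End.mul_apply, (((Commute.pow_pow_self A s M).sub_right
      (Commute.one_right _)).pow_right e).eq.symm, Module.End.mul_apply, hx, map_zero]
  have hq : (q : ℝ) + 1 ≤ j + 1 := by gcongr; exact_mod_cast Nat.div_le_self j M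
  rw [hsplit]
  calc ‖((1 + (A ^ M - 1)) ^ q) ((A ^ s) x)‖ ≤ C * (q + 1) ^ e * (D s * ‖x‖) :=
        (hC _ hy q).trans (by gcongr; exact hD s x)
    _ ≤ C * (j + 1) ^ e * ((∑ s ∈ Finset.range M, D s) * ‖x‖) := by
        gcongr
        · exact mul_nonneg (hD0 s).le (norm_nonneg x)
        · exact hDle s (Nat.mod_lt j hM)
    _ = C * (∑ s ∈ Finset.range M, D s) * (j + 1) ^ e * ‖x‖ := by ring

theorem Units.exists_norm_zpow_apply_le (A : (Module.End 𝕜 (ι → 𝕜))ˣ) {M : ℕ} (hM : 0 < M)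
    (e : ℕ) : ∃ C, 0 ≤ C ∧ ∀ x, ((A.val ^ M - 1) ^ e) x = 0 →
      ∀ i : ℤ, ‖(A ^ i).val x‖ ≤ C * (i.natAbs + 1) ^ e * ‖x‖ := by
  set a := A.val
  set b := A⁻¹.val
  obtain ⟨C₁, hC₁0, hC₁⟩ := a.exists_norm_pow_apply_le hM e
  obtain ⟨C₂, hC₂0, hC₂⟩ := b.exists_norm_pow_apply_le hM e
  have hinv : b ^ M - 1 = -b ^ M * (a ^ M - 1) := by
    have hba : b ^ M * a ^ M = 1 := by
      rw [← (Commute.refl a).units_inv_left.mul_pow, Units.inv_mul, one_pow]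
    noncomm_ring [hba]
  refine ⟨C₁ + C₂, add_nonneg hC₁0 hC₂0, fun x hx i => ?_⟩
  obtain ⟨m, rfl | rfl⟩ := Int.eq_nat_or_neg i
  · rw [zpow_natCast, Units.val_pow_eq_pow_val, Int.natAbs_natCast]
    exact (hC₁ x hx m).trans (by gcongr; linarith)
  · have hcomm : Commute (-b ^ M) (a ^ M - 1) :=
      (((Commute.refl a).units_inv_left.pow_pow M M).neg_left).sub_right (Commute.one_right _)
    have hx' : ((b ^ M - 1) ^ e) x = 0 := by
      rw [hinv, hcomm.mul_pow, Module.End.mul_apply, hx, map_zero]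
    rw [zpow_neg, zpow_natCast, ← inv_pow, Units.val_pow_eq_pow_val, Int.natAbs_neg,
      Int.natAbs_natCast]
    exact (hC₂ x hx' m).trans (by gcongr; linarith)

end LinearGrowth

theorem Module.End.exists_projection_ker_pow {R M : Type*} [Ring R] [AddCommGroup M] [Module R M]
    [IsArtinian R M] [IsNoetherian R M] (B : Module.End R M) :
    ∃ (e : ℕ) (π : Module.End R M), (∀ x, B x = 0 → π x = x) ∧ (∀ x, (B ^ e) (π x) = 0) ∧
      ∀ T : Module.End R M, Commute T B → Commute T π := by
  obtain ⟨e₀, he₀⟩ := Filter.eventually_atTop.mp B.eventually_isCompl_ker_pow_range_pow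
  have hcompl := he₀ (e₀ + 1) e₀.le_succ
  refine ⟨e₀ + 1, (B ^ (e₀ + 1)).ker.projection _ hcompl, fun x hx => ?_, fun x => ?_,
    fun T hT => ?_⟩
  · have : x ∈ (B ^ (e₀ + 1)).ker := by
      rw [LinearMap.mem_ker, pow_succ, Module.End.mul_apply, hx, map_zero]
    exact (Submodule.projection_eq_self_iff _ _).mpr this
  · exact LinearMap.mem_ker.mp (Submodule.projection_apply_mem _ _)
  · have hTe := hT.pow_right (e₀ + 1)
    refine (LinearMap.IsIdempotentElem.commute_iff
      (Submodule.isIdempotentElem_projection hcompl) |>.mpr ⟨?_, ?_⟩).symm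
    · rw [Submodule.range_projection, Module.End.mem_invtSubmodule]
      intro x hx
      rw [Submodule.mem_comap, LinearMap.mem_ker, ← Module.End.mul_apply, ← hTe.eq,
        Module.End.mul_apply, LinearMap.mem_ker.mp hx, map_zero]
    · rw [Submodule.ker_projection, Module.End.mem_invtSubmodule]
      rintro _ ⟨y, rfl⟩
      exact ⟨T y, by rw [← Module.End.mul_apply, ← hTe.eq, Module.End.mul_apply]⟩

section Lattice

variable {ι : Type*} [Fintype ι]

theorem exists_int_coords_le_norm {T : Set (ι → ℚ)} (hT : T.Finite) :
    ∃ (d : ℕ) (b : Fin d → ι → ℚ) (C : ℝ), 0 ≤ C ∧ (∀ i, b i ∈ AddSubgroup.closure T) ∧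
      ∀ v ∈ AddSubgroup.closure T, ∃ a : Fin d → ℤ,
        v = ∑ i, a i • b i ∧ ∀ i, ((a i).natAbs : ℝ) ≤ C * ‖v‖ := by
  set L := Submodule.span ℤ T
  have hL : ∀ v, v ∈ L ↔ v ∈ AddSubgroup.closure T := fun v => by
    rw [← Submodule.span_int_eq_addSubgroupClosure]; rfl
  have : Module.Finite ℤ L := Module.Finite.span_of_finite ℤ hT
  obtain ⟨d, bb⟩ := Module.basisOfFiniteTypeTorsionFree' (R := ℤ) (M := L)
  set b : Fin d → ι → ℚ := fun i => bb i
  have hb : LinearIndependent ℚ b := (LinearIndependent.iff_fractionRing ℤ ℚ).mp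
    (bb.linearIndependent.map' L.subtype L.ker_subtype)
  obtain ⟨g, hg⟩ := LinearMap.exists_leftInverse_of_injective (Fintype.linearCombination ℚ b)
    (LinearMap.ker_eq_bot.mpr (linearIndependent_iff_injective_fintypeLinearCombination.mp hb))
  obtain ⟨C, hC0, hC⟩ := g.exists_bound_of_pi
  refine ⟨d, b, C, hC0.le, fun i => (hL _).mp (bb i).2, fun v hv => ?_⟩
  set a : Fin d → ℤ := ⇑(bb.repr ⟨v, (hL v).mpr hv⟩)
  have hva : v = ∑ i, a i • b i := by
    have h := congrArg Subtype.val (bb.sum_repr ⟨v, (hL v).mpr hv⟩)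
    simp only [Submodule.coe_sum, Submodule.coe_smul] at h
    exact h.symm
  have hgv : g v = fun i => (a i : ℚ) := by
    have : v = Fintype.linearCombination ℚ b (fun i => (a i : ℚ)) := by
      simp [hva, Fintype.linearCombination_apply, Int.cast_smul_eq_zsmul]
    rw [this, ← LinearMap.comp_apply, hg, LinearMap.id_apply]
  refine ⟨a, hva, fun i => ?_⟩
  calc ((a i).natAbs : ℝ) = ‖(a i : ℚ)‖ := by
        rw [Int.norm_cast_rat, Int.norm_eq_abs, Nat.cast_natAbs, Int.cast_abs]
    _ ≤ ‖g v‖ := by rw [hgv]; exact norm_le_pi_norm (fun i => (a i : ℚ)) i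
    _ ≤ C * ‖v‖ := hC v

theorem exists_mem_nsmul_le_norm {T : Set (ι → ℚ)} (hT : T.Finite) (hTs : -T = T) :
    ∃ C : ℝ, 0 ≤ C ∧ ∀ v ∈ AddSubgroup.closure T, ∃ k : ℕ, v ∈ k • T ∧ (k : ℝ) ≤ C * ‖v‖ := by
  obtain ⟨d, b, C, hC0, hb, hcoord⟩ := exists_int_coords_le_norm hT
  choose m hm using fun i => exists_mem_nsmul_of_mem_closure hTs (hb i)
  refine ⟨(∑ i, (m i : ℝ)) * C, by positivity, fun v hv => ?_⟩
  obtain ⟨a, rfl, ha⟩ := hcoord v hv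
  refine ⟨∑ i, m i * (a i).natAbs, ?_, ?_⟩
  · rw [← Finset.sum_nsmul_assoc]
    exact Set.finsetSum_mem_finsetSum _ _ _ fun i _ => zsmul_mem_nsmul hTs (hm i) (a i)
  · push_cast
    rw [Finset.sum_mul, Finset.sum_mul]
    exact Finset.sum_le_sum fun i _ => by rw [mul_assoc]; gcongr; exact ha i

end Lattice

section KQ

variable {n : ℕ} {Q : GL (Fin n) ℚ}

def QLin (n : ℕ) (Q : GL (Fin n) ℚ) : (Module.End ℚ (Fin n → ℚ))ˣ :=
  Matrix.GeneralLinearGroup.toLin Q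

theorem QLin_zpow_apply (i : ℤ) (x : Fin n → ℚ) :
    (QLin n Q ^ i).val x = ((Q ^ i : GL (Fin n) ℚ) : Matrix (Fin n) (Fin n) ℚ).mulVec x := by
  rw [QLin, ← map_zpow, Matrix.GeneralLinearGroup.coe_toLin, Matrix.mulVecLin_apply]

theorem QLin_pow_apply (m : ℕ) (x : Fin n → ℚ) :
    ((QLin n Q).val ^ m) x = ((Q ^ m : GL (Fin n) ℚ) : Matrix (Fin n) (Fin n) ℚ).mulVec x := by
  rw [← Units.val_pow_eq_pow_val, ← zpow_natCast, QLin_zpow_apply, zpow_natCast]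

-- `g = (kPart g, t ^ zPart g)` in `G = K ⋊ ℤ`.
def kPart (g : GQ n Q) : Fin n → ℚ := Multiplicative.toAdd (g : QAmbient n Q).left

def zPart (g : GQ n Q) : ℤ := Multiplicative.toAdd (g : QAmbient n Q).right

theorem kPart_mul (a b : GQ n Q) :
    kPart (a * b) = kPart a + (QLin n Q ^ zPart a).val (kPart b) := by
  rw [QLin_zpow_apply]
  exact congrArg (kPart a + ·) (QMulAut_zpow n Q _ _)

theorem zPart_mul (a b : GQ n Q) : zPart (a * b) = zPart a + zPart b := rfl

theorem kPart_one : kPart (1 : GQ n Q) = 0 := rfl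

theorem zPart_one : zPart (1 : GQ n Q) = 0 := rfl

theorem kPart_inv (a : GQ n Q) :
    kPart a⁻¹ = -(QLin n Q ^ (-zPart a)).val (kPart a) := by
  rw [QLin_zpow_apply, ← Matrix.mulVec_neg]
  exact QMulAut_zpow n Q _ _

theorem zPart_inv (a : GQ n Q) : zPart a⁻¹ = -zPart a := rfl

theorem kPart_mul_of_zPart_eq_zero {a : GQ n Q} (ha : zPart a = 0) (b : GQ n Q) :
    kPart (a * b) = kPart a + kPart b := by
  rw [kPart_mul, ha, zpow_zero, Units.val_one, Module.End.one_apply]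

theorem kPart_inv_of_zPart_eq_zero {a : GQ n Q} (ha : zPart a = 0) : kPart a⁻¹ = -kPart a := by
  rw [kPart_inv, ha, neg_zero, zpow_zero, Units.val_one, Module.End.one_apply]

theorem kPart_tQ : kPart (tQ n Q) = 0 := rfl

theorem zPart_tQ : zPart (tQ n Q) = 1 := rfl

theorem GQ.ext_kPart_zPart {a b : GQ n Q} (hk : kPart a = kPart b) (hz : zPart a = zPart b) :
    a = b :=
  Subtype.ext <| SemidirectProduct.ext hk hz

theorem mem_PQ_iff {h : GQ n Q} : h ∈ (PQ n Q).subgroupOf (GQ n Q) ↔ zPart h = 0 ∧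
    ∃ m : ℕ, 1 ≤ m ∧ ((QLin n Q).val ^ m) (kPart h) = kPart h := by
  simp only [QLin_pow_apply]
  exact ⟨fun ⟨_, hz, hm⟩ => ⟨hz, hm⟩, fun ⟨hz, hm⟩ => ⟨h.2, hz, hm⟩⟩

theorem commute_QLin_pow_zpow (M : ℕ) (i : ℤ) :
    Commute ((QLin n Q).val ^ M) (QLin n Q ^ i).val :=
  ((Commute.refl (QLin n Q)).zpow_right i).units_val.pow_left M

def kPartFixedSubgroup (M : ℕ) : Subgroup (GQ n Q) where
  carrier := {g | ((QLin n Q).val ^ M) (kPart g) = kPart g}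
  one_mem' := by simp [kPart_one]
  mul_mem' {a b} ha hb := by
    rw [Set.mem_ofPred_eq, kPart_mul, map_add, ha, ← Module.End.mul_apply,
      (commute_QLin_pow_zpow M _).eq, Module.End.mul_apply, hb]
  inv_mem' {a} ha := by
    rw [Set.mem_ofPred_eq, kPart_inv, map_neg, ← Module.End.mul_apply,
      (commute_QLin_pow_zpow M _).eq, Module.End.mul_apply, ha]

theorem exists_period_of_finite {X : Set (GQ n Q)} (hXfin : X.Finite)
    (hXP : ∀ x ∈ X, x ∈ (PQ n Q).subgroupOf (GQ n Q)) :
    ∃ M : ℕ, 0 < M ∧ ∀ h ∈ Subgroup.closure X, ((QLin n Q).val ^ M) (kPart h) = kPart h := by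
  have hper : ∀ x, ∃ m : ℕ, 0 < m ∧ (x ∈ X → ((QLin n Q).val ^ m) (kPart x) = kPart x) := by
    intro x
    by_cases hx : x ∈ X
    · obtain ⟨m, hm1, hm⟩ := (mem_PQ_iff.mp (hXP x hx)).2
      exact ⟨m, hm1, fun _ => hm⟩
    · exact ⟨1, one_pos, fun h => absurd h hx⟩
  choose m hm0 hm using hper
  refine ⟨∏ x ∈ hXfin.toFinset, m x, Finset.prod_pos fun x _ => hm0 x, fun h hh => ?_⟩
  refine Subgroup.closure_le (K := kPartFixedSubgroup _) |>.mpr (fun x hx => ?_) hh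
  obtain ⟨l, hl⟩ := Finset.dvd_prod_of_mem m (hXfin.mem_toFinset.mpr hx)
  show ((QLin n Q).val ^ _) (kPart x) = kPart x
  rw [hl, pow_mul, Module.End.pow_apply]
  exact Function.iterate_fixed (hm x hx) l

theorem natAbs_zPart_le_of_mem_pow {S : Set (GQ n Q)} (hS : ∀ s ∈ S, (zPart s).natAbs ≤ 1)
    {k : ℕ} {g : GQ n Q} (hg : g ∈ S ^ k) : (zPart g).natAbs ≤ k := by
  induction k generalizing g with
  | zero =>
    rw [pow_zero, Set.mem_one] at hg
    rw [hg, zPart_one]; rfl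
  | succ k ih =>
    rw [pow_succ] at hg
    obtain ⟨a, ha, b, hb, rfl⟩ := hg
    rw [zPart_mul]
    exact (Int.natAbs_add_le _ _).trans (add_le_add (ih ha) (hS b hb))

theorem norm_map_kPart_le_of_mem_pow (f : Module.End ℚ (Fin n → ℚ)) {R S : Set (GQ n Q)}
    (hR : ∀ g ∈ R, zPart g = 0) (hS : S ⊆ R ∪ {tQ n Q, (tQ n Q)⁻¹}) {F : ℕ → ℝ}
    (hF : Monotone F) (hF0 : ∀ j, 0 ≤ F j)
    (hfR : ∀ (i : ℤ), ∀ g ∈ R, ‖f ((QLin n Q ^ i).val (kPart g))‖ ≤ F i.natAbs)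
    {k : ℕ} {g : GQ n Q} (hg : g ∈ S ^ k) : ‖f (kPart g)‖ ≤ k * F k := by
  have htQ : ∀ s ∈ ({tQ n Q, (tQ n Q)⁻¹} : Set (GQ n Q)), (zPart s).natAbs ≤ 1 ∧ kPart s = 0 := by
    rintro s (rfl | rfl)
    · exact ⟨le_rfl, kPart_tQ⟩
    · rw [zPart_inv, kPart_inv, zPart_tQ, kPart_tQ, map_zero, neg_zero]
      exact ⟨le_rfl, rfl⟩
  have hSz : ∀ s ∈ S, (zPart s).natAbs ≤ 1 := fun s hs =>
    (hS hs).elim (fun h => by rw [hR s h]; exact zero_le_one) fun h => (htQ s h).1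
  induction k generalizing g with
  | zero =>
    rw [pow_zero, Set.mem_one] at hg
    simp [hg, kPart_one]
  | succ k ih =>
    rw [pow_succ] at hg
    obtain ⟨a, ha, b, hb, rfl⟩ := hg
    have hza : (zPart a).natAbs ≤ k + 1 := (natAbs_zPart_le_of_mem_pow hSz ha).trans k.le_succ
    have hFk : F k ≤ F (k + 1) := hF k.le_succ
    rw [kPart_mul, map_add]
    rcases hS hb with hbR | hbt
    · calc _ ≤ ‖f (kPart a)‖ + ‖f ((QLin n Q ^ zPart a).val (kPart b))‖ := norm_add_le _ _
        _ ≤ k * F (k + 1) + F (k + 1) :=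
          add_le_add ((ih ha).trans (by gcongr)) ((hfR _ b hbR).trans (hF hza))
        _ = (k + 1 : ℕ) * F (k + 1) := by push_cast; ring
    · rw [(htQ b hbt).2, map_zero, map_zero, add_zero]
      calc _ ≤ k * F k := ih ha
        _ ≤ (k + 1 : ℕ) * F (k + 1) := by gcongr; exacts [hF0 _, k.le_succ]

theorem zPart_eq_zero_and_kPart_mem_closure {X : Set (GQ n Q)} (hX : ∀ x ∈ X, zPart x = 0) {h : GQ n Q}
    (hh : h ∈ Subgroup.closure X) :
    zPart h = 0 ∧ kPart h ∈ AddSubgroup.closure (kPart '' X) := by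
  induction hh using Subgroup.closure_induction with
  | mem x hx => exact ⟨hX x hx, AddSubgroup.subset_closure (Set.mem_image_of_mem _ hx)⟩
  | one => exact ⟨zPart_one, kPart_one ▸ zero_mem _⟩
  | mul a b _ _ ha hb =>
    rw [zPart_mul, kPart_mul_of_zPart_eq_zero ha.1, ha.1, hb.1]
    exact ⟨rfl, add_mem ha.2 hb.2⟩
  | inv a _ ha =>
    rw [zPart_inv, kPart_inv_of_zPart_eq_zero ha.1, ha.1]
    exact ⟨rfl, neg_mem ha.2⟩

theorem exists_mem_pow_kPart_eq {X : Set (GQ n Q)} (hX : ∀ x ∈ X, zPart x = 0) {k : ℕ}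
    {v : Fin n → ℚ} (hv : v ∈ k • (kPart '' X)) : ∃ g ∈ X ^ k, zPart g = 0 ∧ kPart g = v := by
  induction k generalizing v with
  | zero =>
    rw [zero_smul, Set.mem_zero] at hv
    exact ⟨1, by rw [pow_zero]; rfl, zPart_one, hv ▸ kPart_one⟩
  | succ k ih =>
    rw [succ_nsmul] at hv
    obtain ⟨w, hw, _, ⟨x, hx, rfl⟩, rfl⟩ := hv
    obtain ⟨g, hg, hgz, rfl⟩ := ih hw
    refine ⟨g * x, ?_, by rw [zPart_mul, hgz, hX x hx, add_zero], kPart_mul_of_zPart_eq_zero hgz x⟩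
    rw [pow_succ]
    exact Set.mul_mem_mul hg hx

theorem exists_wordLength_le_norm_kPart {X : Set (GQ n Q)} (hXfin : X.Finite)
    (hXsymm : X⁻¹ = X) (hX : ∀ x ∈ X, zPart x = 0) :
    ∃ C : ℝ, 0 ≤ C ∧ ∀ h ∈ Subgroup.closure X, (wordLength X h : ℝ) ≤ C * ‖kPart h‖ := by
  have hsymm : -(kPart '' X) = kPart '' X := by
    ext v
    simp only [Set.mem_neg, Set.mem_image]
    constructor
    · rintro ⟨x, hx, hxv⟩
      refine ⟨x⁻¹, hXsymm ▸ Set.inv_mem_inv.mpr hx, ?_⟩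
      rw [kPart_inv_of_zPart_eq_zero (hX x hx), hxv, neg_neg]
    · rintro ⟨x, hx, rfl⟩
      exact ⟨x⁻¹, hXsymm ▸ Set.inv_mem_inv.mpr hx, kPart_inv_of_zPart_eq_zero (hX x hx)⟩
  obtain ⟨C, hC0, hC⟩ := exists_mem_nsmul_le_norm (hXfin.image kPart) hsymm
  refine ⟨C, hC0, fun h hh => ?_⟩
  obtain ⟨hz, hmem⟩ := zPart_eq_zero_and_kPart_mem_closure hX hh
  obtain ⟨k, hk, hkC⟩ := hC _ hmem
  obtain ⟨g, hg, hgz, hgk⟩ := exists_mem_pow_kPart_eq hX hk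
  rw [GQ.ext_kPart_zPart hgk (hgz.trans hz.symm)] at hg
  exact (Nat.cast_le.mpr (wordLength_le_of_mem_pow hg)).trans hkC

theorem exists_norm_kPart_le_of_mem_pow {R S : Set (GQ n Q)} (hRfin : R.Finite)
    (hR : ∀ g ∈ R, zPart g = 0) (hS : S ⊆ R ∪ {tQ n Q, (tQ n Q)⁻¹}) {M : ℕ} (hM : 0 < M) :
    ∃ (C : ℝ) (d : ℕ), 0 ≤ C ∧ ∀ k : ℕ, ∀ h ∈ S ^ k,
      ((QLin n Q).val ^ M) (kPart h) = kPart h → ‖kPart h‖ ≤ C * (k + 1) ^ d := by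
  obtain ⟨e, π, hπfix, hπker, hπcomm⟩ := ((QLin n Q).val ^ M - 1).exists_projection_ker_pow
  obtain ⟨c, hc0, hc⟩ := (QLin n Q).exists_norm_zpow_apply_le hM e
  set CR := ∑ g ∈ hRfin.toFinset, ‖π (kPart g)‖
  have hCR : ∀ g ∈ R, ‖π (kPart g)‖ ≤ CR := fun g hg =>
    Finset.single_le_sum (f := fun g => ‖π (kPart g)‖) (fun _ _ => norm_nonneg _)
      (hRfin.mem_toFinset.mpr hg)
  have hCR0 : 0 ≤ CR := Finset.sum_nonneg fun _ _ => norm_nonneg _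
  have hπR : ∀ (i : ℤ), ∀ g ∈ R,
      ‖π ((QLin n Q ^ i).val (kPart g))‖ ≤ c * (i.natAbs + 1) ^ e * CR := by
    intro i g hg
    rw [← Module.End.mul_apply, ← (hπcomm _ ((commute_QLin_pow_zpow M i).symm.sub_right
      (Commute.one_right _))).eq, Module.End.mul_apply]
    exact (hc _ (hπker _) i).trans (by gcongr; exact hCR g hg)
  refine ⟨c * CR, e + 1, mul_nonneg hc0 hCR0, fun k h hh hfix => ?_⟩
  have hπh : π (kPart h) = kPart h :=
    hπfix _ (by rw [LinearMap.sub_apply, hfix, Module.End.one_apply, sub_self])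
  have hbound := norm_map_kPart_le_of_mem_pow π hR hS (F := fun j => c * (j + 1) ^ e * CR)
    (fun a b hab => by dsimp only; gcongr) (fun j => by positivity) hπR hh
  rw [hπh] at hbound
  calc ‖kPart h‖ ≤ k * (c * (k + 1) ^ e * CR) := hbound
    _ ≤ (k + 1) * (c * (k + 1) ^ e * CR) := by gcongr; linarith
    _ = c * CR * (k + 1) ^ (e + 1) := by ring

end KQ

theorem periodic_points_polynomially_distorted_in_KQ_general
    (n : ℕ) (Q : GL (Fin n) ℚ)
    (R : Set ↥(GQ n Q)) (hRfin : R.Finite) (hRsymm : R⁻¹ = R)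
    (hRK : ∀ g ∈ R, (g : QAmbient n Q).right = 1)
    (S : Set ↥(GQ n Q)) (hS : S = R ∪ {tQ n Q, (tQ n Q)⁻¹})
    (hSgen : Subgroup.closure S = ⊤)
    (X : Set ↥(GQ n Q)) (hXfin : X.Finite) (hXsymm : X⁻¹ = X)
    (hXgen : Subgroup.closure X = (PQ n Q).subgroupOf (GQ n Q)) :
    ∃ C d : ℕ, ∀ r : ℕ, 1 ≤ r →
      distortion ((PQ n Q).subgroupOf (GQ n Q)) S X r ≤ C * r ^ d := by
  have hSsymm : S⁻¹ = S := by
    rw [hS, Set.union_inv, hRsymm, Set.inv_insert, Set.inv_singleton, inv_inv, Set.pair_comm]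
  have hXP : ∀ x ∈ X, x ∈ (PQ n Q).subgroupOf (GQ n Q) := fun x hx =>
    hXgen ▸ Subgroup.subset_closure hx
  obtain ⟨M, hM, hfix⟩ := exists_period_of_finite hXfin hXP
  obtain ⟨C₁, d, hC₁, hnorm⟩ := exists_norm_kPart_le_of_mem_pow hRfin hRK hS.subset hM
  obtain ⟨C₂, hC₂, hword⟩ :=
    exists_wordLength_le_norm_kPart hXfin hXsymm fun x hx => (mem_PQ_iff.mp (hXP x hx)).1
  refine ⟨⌈C₂ * C₁ * 2 ^ d⌉₊, d, fun r hr => distortion_le fun h hh hhr => ?_⟩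
  rw [← hXgen] at hh
  have hhS := mem_pow_wordLength hSsymm (hSgen ▸ Subgroup.mem_top h)
  have hr2 : (wordLength S h : ℝ) + 1 ≤ 2 * r := by
    have : (1 : ℝ) ≤ r := by exact_mod_cast hr
    have : (wordLength S h : ℝ) ≤ r := by exact_mod_cast hhr
    linarith
  have : (wordLength X h : ℝ) ≤ ⌈C₂ * C₁ * 2 ^ d⌉₊ * r ^ d := calc
    _ ≤ C₂ * ‖kPart h‖ := hword h hh
    _ ≤ C₂ * (C₁ * (wordLength S h + 1) ^ d) := by gcongr; exact hnorm _ h hhS (hfix h hh)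
    _ ≤ C₂ * (C₁ * (2 * r) ^ d) := by gcongr
    _ = C₂ * C₁ * 2 ^ d * r ^ d := by ring
    _ ≤ ⌈C₂ * C₁ * 2 ^ d⌉₊ * r ^ d := by gcongr; exact Nat.le_ceil _
  exact_mod_cast this

/-- Let `Q ∈ GL_n(ℚ)`, let `K = ⟨Qⁱ(ℤⁿ) : i ∈ ℤ⟩ ≤ ℚⁿ`, and let
`G = K ⋊_Q ℤ`.  Let `P_Q = {v ∈ K : Qᵐv = v for some m ≥ 1}`.  Let `R ⊆ K` be a finite
symmetric set such that `S = {(r,1) : r ∈ R} ∪ {(0,t),(0,t⁻¹)}` generates `G`, and let `X` be a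
finite symmetric generating set of `P_Q` containing the identity.  Then `P_Q` is at most
polynomially distorted in `G`: there are constants `C, d` with `Δ_G^{P_Q}(r) ≤ C·rᵈ` for all
`r ≥ 1`. -/
theorem periodic_points_polynomially_distorted_in_KQ
    (n : ℕ) (Q : GL (Fin n) ℚ)
    (R : Set ↥(GQ n Q)) (hRfin : R.Finite) (hRsymm : R⁻¹ = R)
    (hRK : ∀ g ∈ R, (g : QAmbient n Q).right = 1)
    (S : Set ↥(GQ n Q)) (hS : S = R ∪ {tQ n Q, (tQ n Q)⁻¹})
    (hSgen : Subgroup.closure S = ⊤)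
    (X : Set ↥(GQ n Q)) (hXfin : X.Finite) (hXsymm : X⁻¹ = X) (hX1 : (1 : ↥(GQ n Q)) ∈ X)
    (hXgen : Subgroup.closure X = (PQ n Q).subgroupOf (GQ n Q)) :
    ∃ C d : ℕ, ∀ r : ℕ, 1 ≤ r →
      distortion ((PQ n Q).subgroupOf (GQ n Q)) S X r ≤ C * r ^ d :=
  periodic_points_polynomially_distorted_in_KQ_general n Q R hRfin hRsymm hRK S hS hSgen X hXfin
    hXsymm hXgen
end
end

section
/- Let G = K ⋊_φ ⟨t⟩ be a finitely generated abelian-by-cyclic group and let S be any finite symmetric generating set of G containing the identity. Then the relative growth of the group of periodic points P_φ in G is polynomial: there exist constants C and d such that |P_φ ∩ Sʳ| ≤ C·rᵈ for all r ≥ 1. -/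
/-!
Write `K` additively as a module over `ℤ[T;T⁻¹]`, with `T` acting by `φ`. The `K`-component of
a product of `r` elements of `S` is a sum of `r` terms `T ^ e • b` with `|e| ≤ c r` and `b` a
`K`-component of an element of `S`, so everything happens in the finitely generated, hence
Noetherian, submodule `M` spanned by these components. There all periodic points are killed by
`p = T ^ N - 1` for a single `N`, and for large `m` the kernel of `p` meets `p ^ m M` trivially,
so the periodic points inject into `M / p ^ m M`. In that quotient `T ^ N = 1 + p` is unipotent:
`T ^ (N k) = ∑_{i < m} (k choose i) p ^ i`, so each `T ^ e • b` is an integer combination of a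
fixed finite family with coefficients `O(|e| ^ m)`, and the image of `S ^ r` lies in a box of
polynomial size.
-/

open scoped Pointwise

private lemma pow_fix {K : Type*} [CommGroup K] (ψ : MulAut K) (x : K) (hx : ψ x = x) :
    ∀ m : ℕ, (ψ ^ m) x = x := by
  intro m
  induction m with
  | zero => simp
  | succ m ih => rw [pow_succ, MulAut.mul_apply, hx, ih]

/-- The subgroup of periodic points of an automorphism `φ` of an abelian group `K`. -/
def periodicPts {K : Type*} [CommGroup K] (φ : MulAut K) : Subgroup K where
  carrier := {a : K | ∃ n : ℕ, 1 ≤ n ∧ (φ ^ n) a = a}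
  one_mem' := ⟨1, le_refl 1, by simp⟩
  mul_mem' := by
    rintro a b ⟨n, hn, ha⟩ ⟨m, hm, hb⟩
    refine ⟨n * m, Nat.one_le_iff_ne_zero.2 (by positivity), ?_⟩
    have h1 : (φ ^ (n * m)) a = a := by
      rw [pow_mul]; exact pow_fix (φ ^ n) a ha m
    have h2 : (φ ^ (n * m)) b = b := by
      rw [mul_comm, pow_mul]; exact pow_fix (φ ^ m) b hb n
    rw [map_mul, h1, h2]
  inv_mem' := by
    rintro a ⟨n, hn, ha⟩
    exact ⟨n, hn, by rw [map_inv, ha]⟩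

open LaurentPolynomial

section BoundedCombinations

variable {ι W : Type*} [Fintype ι] [AddCommGroup W]

def boundedCombinations (g : ι → W) (c : ℕ) : Set W :=
  {x | ∃ n : ι → ℤ, (∀ j, |n j| ≤ c) ∧ ∑ j, n j • g j = x}

theorem boundedCombinations_eq_image [DecidableEq ι] (g : ι → W) (c : ℕ) :
    boundedCombinations g c = (fun n : ι → ℤ => ∑ j, n j • g j) ''
      (Fintype.piFinset fun _ : ι => Finset.Icc (-(c : ℤ)) c : Finset (ι → ℤ)) := by
  ext x
  simp only [boundedCombinations, Set.mem_ofPred_eq, Set.mem_image, Finset.mem_coe,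
    Fintype.mem_piFinset, Finset.mem_Icc, abs_le]

theorem boundedCombinations_finite (g : ι → W) (c : ℕ) : (boundedCombinations g c).Finite := by
  classical
  rw [boundedCombinations_eq_image]
  exact (Finset.finite_toSet _).image _

theorem ncard_boundedCombinations_le (g : ι → W) (c : ℕ) :
    (boundedCombinations g c).ncard ≤ (2 * c + 1) ^ Fintype.card ι := by
  classical
  rw [boundedCombinations_eq_image]
  refine (Set.ncard_image_le (Finset.finite_toSet _)).trans_eq ?_
  rw [Set.ncard_coe_finset, Fintype.card_piFinset, Int.card_Icc]
  simp only [Finset.prod_const, Finset.card_univ]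
  congr 1
  omega

theorem add_mem_boundedCombinations {g : ι → W} {c₁ c₂ : ℕ} {x y : W}
    (hx : x ∈ boundedCombinations g c₁) (hy : y ∈ boundedCombinations g c₂) :
    x + y ∈ boundedCombinations g (c₁ + c₂) := by
  obtain ⟨n, hn, rfl⟩ := hx
  obtain ⟨n', hn', rfl⟩ := hy
  refine ⟨n + n', fun j => ?_, by simp [add_smul, Finset.sum_add_distrib]⟩
  push_cast
  exact (abs_add_le _ _).trans (add_le_add (hn j) (hn' j))

theorem nsmul_boundedCombinations_subset (g : ι → W) (c r : ℕ) :
    r • boundedCombinations g c ⊆ boundedCombinations g (r * c) := by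
  induction r with
  | zero =>
    rw [zero_nsmul, Set.zero_subset]
    exact ⟨0, by simp, by simp⟩
  | succ r ih =>
    rw [succ_nsmul, add_mul, one_mul]
    rintro _ ⟨x, hx, y, hy, rfl⟩
    exact add_mem_boundedCombinations (ih hx) hy

theorem boundedCombinations_comp_subset {κ : Type*} [Fintype κ] (g : ι → W) {σ : κ → ι}
    (hσ : Function.Injective σ) (c : ℕ) :
    boundedCombinations (g ∘ σ) c ⊆ boundedCombinations g c := by
  classical
  intro x hx
  obtain ⟨n, hn, rfl⟩ := hx
  refine ⟨Function.extend σ n 0, fun j => ?_, ?_⟩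
  · by_cases h : ∃ i, σ i = j
    · obtain ⟨i, rfl⟩ := h
      rw [hσ.extend_apply]; exact hn i
    · simp [Function.extend_apply' _ _ _ h]
  · rw [← Finset.sum_subset (Finset.subset_univ (Finset.univ.image σ)),
      Finset.sum_image hσ.injOn]
    · simp [hσ.extend_apply]
    · intro j _ hj
      have : ¬∃ i, σ i = j := by
        rintro ⟨i, rfl⟩
        exact hj (Finset.mem_image_of_mem σ (Finset.mem_univ i))
      simp [Function.extend_apply' _ _ _ this]

end BoundedCombinations

theorem Module.End.exists_uniform_period {R M : Type*} [Ring R] [AddCommGroup M] [Module R M]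
    [IsNoetherian R M] (f : Module.End R M) :
    ∃ N, 0 < N ∧ ∀ x ∈ Function.periodicPts f, Function.IsPeriodicPt f N x := by
  have mem_ker (k : ℕ) (x : M) :
      x ∈ LinearMap.ker (f ^ k - 1) ↔ Function.IsPeriodicPt f k x := by
    rw [LinearMap.mem_ker, LinearMap.sub_apply, sub_eq_zero, Module.End.pow_apply]; rfl
  let chain : ℕ →o Submodule R M :=
    ⟨fun n => LinearMap.ker (f ^ n.factorial - 1), monotone_nat_of_le_succ fun n x hx => by
      rw [mem_ker] at hx ⊢
      rw [Nat.factorial_succ, mul_comm]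
      exact hx.mul_const _⟩
  obtain ⟨n₀, hn₀⟩ := monotone_stabilizes_iff_noetherian.mpr inferInstance chain
  refine ⟨n₀.factorial, n₀.factorial_pos, fun x hx => ?_⟩
  obtain ⟨n, hn, hxn⟩ := Function.mem_periodicPts.1 hx
  obtain ⟨k, hk⟩ := Nat.dvd_factorial hn (le_max_left n n₀)
  have : x ∈ chain (max n n₀) := by
    show x ∈ LinearMap.ker _
    rw [mem_ker, hk]
    exact hxn.mul_const k
  rw [← hn₀ _ (le_max_right n n₀)] at this
  exact (mem_ker _ _).1 this

theorem exists_injOn_mkQ_range_lsmul_pow {R M : Type*} [CommRing R] [AddCommGroup M]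
    [Module R M] [IsNoetherian R M] (p : R) :
    ∃ m, 0 < m ∧
      Set.InjOn (LinearMap.range (LinearMap.lsmul R M (p ^ m))).mkQ {x | p • x = 0} := by
  obtain ⟨m, hdisj, hm⟩ := ((Algebra.lsmul R R M p).eventually_disjoint_ker_pow_range_pow.and
    (Filter.eventually_gt_atTop 0)).exists
  refine ⟨m, hm, fun x hx y hy hxy => sub_eq_zero.1 ?_⟩
  rw [← map_pow] at hdisj
  refine Submodule.disjoint_def.1 hdisj _ ?_ ((Submodule.Quotient.eq _).1 hxy)
  rw [LinearMap.mem_ker]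
  obtain ⟨k, rfl⟩ := Nat.exists_eq_add_of_lt hm
  simp [pow_succ, smul_sub, hx.out, hy.out]

theorem smul_quotient_range_lsmul_eq_zero {R M : Type*} [CommRing R] [AddCommGroup M] [Module R M]
    (a : R) (w : M ⧸ LinearMap.range (LinearMap.lsmul R M a)) : a • w = 0 := by
  induction w using Submodule.Quotient.induction_on with
  | _ x => rw [← Submodule.Quotient.mk_smul, Submodule.Quotient.mk_eq_zero]; exact ⟨x, rfl⟩

section Binomial

variable {R M : Type*} [CommRing R] [AddCommGroup M] [Module R M] {m : ℕ}

theorem pow_smul_eq_sum_choose {v : R} (hv : ∀ w : M, (v - 1) ^ m • w = 0) (k : ℕ) (y : M) :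
    v ^ k • y = ∑ i : Fin m, k.choose i • ((v - 1) ^ (i : ℕ) • y) := by
  have hvanish : ∀ i, m ≤ i ∨ k < i → k.choose i • ((v - 1) ^ i • y) = 0 := by
    rintro i (hi | hi)
    · rw [← Nat.add_sub_cancel' hi, pow_add, mul_comm, mul_smul, hv, smul_zero, smul_zero]
    · rw [Nat.choose_eq_zero_of_lt hi, zero_smul]
  calc v ^ k • y = ((v - 1) + 1) ^ k • y := by rw [sub_add_cancel]
    _ = ∑ i ∈ Finset.range (k + 1), k.choose i • ((v - 1) ^ i • y) := by
      simp only [add_pow, one_pow, Finset.sum_smul, mul_comm, mul_smul, one_smul,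
        Nat.cast_smul_eq_nsmul]
    _ = ∑ i ∈ Finset.range (min (k + 1) m), k.choose i • ((v - 1) ^ i • y) :=
      (Finset.sum_subset (Finset.range_subset_range.2 (min_le_left _ _)) fun i _ hi =>
        hvanish i (by simp at hi; omega)).symm
    _ = ∑ i ∈ Finset.range m, k.choose i • ((v - 1) ^ i • y) :=
      Finset.sum_subset (Finset.range_subset_range.2 (min_le_right _ _)) fun i _ hi =>
        hvanish i (by simp at hi; omega)
    _ = _ := (Fin.sum_univ_eq_sum_range (fun i => k.choose i • ((v - 1) ^ i • y)) m).symm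

theorem pow_smul_mem_boundedCombinations {v : R} (hv : ∀ w : M, (v - 1) ^ m • w = 0) {k E : ℕ}
    (hk : k ≤ E) (y : M) :
    v ^ k • y ∈
      boundedCombinations (fun i : Fin m => (v - 1) ^ (i : ℕ) • y) ((E + 1) ^ m) := by
  refine ⟨fun i => k.choose i, fun i => ?_, ?_⟩
  · rw [abs_of_nonneg (by positivity)]
    calc (k.choose i : ℤ) ≤ (k ^ (i : ℕ) : ℕ) := by exact_mod_cast Nat.choose_le_pow k i
      _ ≤ ((E + 1) ^ m : ℕ) := by
        exact_mod_cast (Nat.pow_le_pow_left (hk.trans E.le_succ) _).trans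
          (Nat.pow_le_pow_right E.succ_pos i.2.le)
  · simp only [pow_smul_eq_sum_choose hv, natCast_zsmul]

theorem inv_sub_one_pow_smul_eq_zero {v : Rˣ} (hv : ∀ w : M, ((v : R) - 1) ^ m • w = 0)
    (w : M) :
    ((↑v⁻¹ : R) - 1) ^ m • w = 0 := by
  have : (↑v⁻¹ : R) - 1 = -↑v⁻¹ * ((v : R) - 1) := by
    rw [mul_sub, neg_mul, Units.inv_mul]; ring
  rw [this, mul_pow, mul_smul, hv, smul_zero]

theorem zpow_smul_mem_boundedCombinations {v : Rˣ} (hv : ∀ w : M, ((v : R) - 1) ^ m • w = 0)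
    {k : ℤ} {E : ℕ} (hk : k.natAbs ≤ E) (y : M) :
    v ^ k • y ∈ boundedCombinations
      (fun j : Bool × Fin m => ((↑(cond j.1 v v⁻¹) : R) - 1) ^ (j.2 : ℕ) • y)
      ((E + 1) ^ m) := by
  rcases Int.natAbs_eq k with hk' | hk'
  · rw [hk', zpow_natCast, Units.smul_def, Units.val_pow_eq_pow_val]
    exact boundedCombinations_comp_subset _ (Prod.mk_right_injective true) _
      (pow_smul_mem_boundedCombinations hv hk y)
  · rw [hk', zpow_neg, zpow_natCast, ← inv_pow, Units.smul_def, Units.val_pow_eq_pow_val]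
    exact boundedCombinations_comp_subset _ (Prod.mk_right_injective false) _
      (pow_smul_mem_boundedCombinations (inv_sub_one_pow_smul_eq_zero hv) hk y)

end Binomial

theorem Set.Finite.nsmul {M : Type*} [AddMonoid M] {A : Set M} (hA : A.Finite) (r : ℕ) :
    (r • A).Finite := by
  classical
  rw [← hA.coe_toFinset, ← Finset.coe_nsmul]
  exact Finset.finite_toSet _

section OrbitBall

variable {R M : Type*} [CommRing R] [AddCommGroup M] [Module R M]

def orbitBall (u : Rˣ) (B : Set M) (E : ℕ) : Set M :=
  {x | ∃ e : ℤ, e.natAbs ≤ E ∧ ∃ b ∈ B, u ^ e • b = x}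

theorem orbitBall_mono (u : Rˣ) (B : Set M) {E E' : ℕ} (h : E ≤ E') :
    orbitBall u B E ⊆ orbitBall u B E' := fun _ ⟨e, he, hb⟩ => ⟨e, he.trans h, hb⟩

theorem Set.Finite.orbitBall (u : Rˣ) {B : Set M} (hB : B.Finite) (E : ℕ) :
    (orbitBall u B E).Finite := by
  refine (((Set.finite_Icc (-(E : ℤ)) E).prod hB).image fun p => u ^ p.1 • p.2).subset ?_
  rintro _ ⟨e, he, b, hb, rfl⟩
  exact ⟨(e, b), ⟨⟨by omega, by omega⟩, hb⟩, rfl⟩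

theorem LinearMap.image_orbitBall {N : Type*} [AddCommGroup N] [Module R N] (f : M →ₗ[R] N)
    (u : Rˣ) (B : Set M) (E : ℕ) : f '' orbitBall u B E = orbitBall u (f '' B) E := by
  ext x
  simp only [_root_.orbitBall, Set.mem_image, Set.mem_ofPred_eq]
  constructor
  · rintro ⟨_, ⟨e, he, b, hb, rfl⟩, rfl⟩
    exact ⟨e, he, f b, ⟨b, hb, rfl⟩, by simp only [Units.smul_def, map_smul]⟩
  · rintro ⟨e, he, _, ⟨b, hb, rfl⟩, rfl⟩
    exact ⟨u ^ e • b, ⟨e, he, b, hb, rfl⟩, by simp only [Units.smul_def, map_smul]⟩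

/-- The vectors `(u ^ (± N) - 1) ^ i • u ^ s • b` with `i < m`, `s < N`, `b ∈ B`: writing
`e = N k + s`, the binomial expansion of `(u ^ (± N)) ^ |k|` expresses `u ^ e • b` in them. -/
def orbitGens (u : Rˣ) (N m : ℕ) (B : Set M) : B × Fin N × Bool × Fin m → M :=
  fun j => ((↑(cond j.2.2.1 (u ^ N) (u ^ N)⁻¹) : R) - 1) ^ (j.2.2.2 : ℕ) •
    (u ^ (j.2.1 : ℕ) • (j.1 : M))

theorem orbitBall_subset_boundedCombinations {u : Rˣ} {N m : ℕ} (hN : 0 < N)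
    (hu : ∀ w : M, ((↑(u ^ N) : R) - 1) ^ m • w = 0) (B : Set M) [Fintype B] (E : ℕ) :
    orbitBall u B E ⊆ boundedCombinations (orbitGens u N m B) ((E + 1) ^ m) := by
  rintro _ ⟨e, he, b, hb, rfl⟩
  have hN' : (0 : ℤ) < N := by exact_mod_cast hN
  have := Int.emod_lt_of_pos e hN'
  set s : Fin N := ⟨(e % N).toNat, by omega⟩
  have hsplit : u ^ e • b = (u ^ N) ^ (e / N) • (u ^ (s : ℕ) • b) := by
    rw [smul_smul, ← zpow_natCast, ← zpow_natCast, ← zpow_mul, ← zpow_add]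
    congr 2
    simp only [s, Int.toNat_of_nonneg (Int.emod_nonneg e hN'.ne')]
    exact (Int.mul_ediv_add_emod e N).symm
  rw [hsplit]
  have hσ : Function.Injective fun j : Bool × Fin m => ((⟨b, hb⟩ : B), s, j) :=
    fun _ _ h => (Prod.ext_iff.1 (Prod.ext_iff.1 h).2).2
  have key := zpow_smul_mem_boundedCombinations hu ((Int.natAbs_ediv_le_natAbs e N).trans he)
    (u ^ (s : ℕ) • b)
  exact boundedCombinations_comp_subset (orbitGens u N m B) hσ _ key

end OrbitBall

section Periodic

variable {R M : Type*} [CommRing R] [AddCommGroup M] [Module R M]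

theorem mem_periodicPts_smul {u : Rˣ} {x : M} :
    x ∈ Function.periodicPts (u • · : M → M) ↔ ∃ n, 0 < n ∧ u ^ n • x = x := by
  simp only [Function.mem_periodicPts, Function.IsPeriodicPt, Function.IsFixedPt, smul_iterate]

theorem LinearMap.image_periodicPts_inter_nsmul_orbitBall {N : Type*} [AddCommGroup N]
    [Module R N] {f : M →ₗ[R] N} (hf : Function.Injective f) (u : Rˣ) (B : Set M) (r E : ℕ) :
    f '' (Function.periodicPts (u • · : M → M) ∩ r • orbitBall u B E) =
      Function.periodicPts (u • · : N → N) ∩ r • orbitBall u (f '' B) E := by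
  have hpre :
      Function.periodicPts (u • · : M → M) = f ⁻¹' Function.periodicPts (u • ·) := by
    ext x
    rw [Set.mem_preimage, mem_periodicPts_smul, mem_periodicPts_smul]
    simp only [Units.smul_def, ← map_smul, hf.eq_iff]
  rw [hpre, Set.inter_comm, Set.image_inter_preimage, Set.image_nsmul, f.image_orbitBall,
    Set.inter_comm]

theorem exists_ncard_periodicPts_inter_nsmul_orbitBall_le_of_isNoetherian [IsNoetherian R M]
    (u : Rˣ) {B : Set M} (hB : B.Finite) :
    ∃ C d : ℕ, ∀ r E : ℕ, 0 < r →
      (Function.periodicPts (u • · : M → M) ∩ r • orbitBall u B E).ncard ≤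
        C * (r * (E + 1)) ^ d := by
  obtain ⟨N, hN, hper⟩ := (Algebra.lsmul R R M (u : R)).exists_uniform_period
  set p : R := ↑(u ^ N) - 1
  obtain ⟨m, hm, hinj⟩ := exists_injOn_mkQ_range_lsmul_pow (M := M) p
  set q := (LinearMap.range (LinearMap.lsmul R M (p ^ m))).mkQ
  have hker : ∀ x ∈ Function.periodicPts (u • · : M → M), p • x = 0 := by
    intro x hx
    have h : (u • · : M → M)^[N] x = x := hper x hx
    simp only [smul_iterate] at h
    rw [sub_smul, one_smul, ← Units.smul_def, h, sub_self]
  have hkill : ∀ w : M ⧸ LinearMap.range (LinearMap.lsmul R M (p ^ m)), p ^ m • w = 0 :=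
    smul_quotient_range_lsmul_eq_zero _
  have := (hB.image q).fintype
  set n := Fintype.card (q '' B × Fin N × Bool × Fin m)
  refine ⟨3 ^ n, m * n, fun r E hr => ?_⟩
  have hmaps : Set.MapsTo q (Function.periodicPts (u • · : M → M) ∩ r • orbitBall u B E)
      (boundedCombinations (orbitGens u N m (q '' B)) (r * (E + 1) ^ m)) := by
    rintro x ⟨-, hx⟩
    have hqx : q x ∈ q '' (r • orbitBall u B E) := Set.mem_image_of_mem q hx
    rw [Set.image_nsmul, q.image_orbitBall] at hqx
    exact nsmul_boundedCombinations_subset _ _ _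
      (Set.nsmul_subset_nsmul_left (orbitBall_subset_boundedCombinations hN hkill _ E) hqx)
  have hbase : 2 * (r * (E + 1) ^ m) + 1 ≤ 3 * (r * (E + 1)) ^ m := by
    have h₁ : r * (E + 1) ^ m ≤ (r * (E + 1)) ^ m := by
      rw [mul_pow]; exact Nat.mul_le_mul_right _ (Nat.le_self_pow hm.ne' r)
    have h₂ : 0 < r * (E + 1) ^ m := by positivity
    omega
  calc _ ≤ (boundedCombinations (orbitGens u N m (q '' B)) (r * (E + 1) ^ m)).ncard :=
        Set.ncard_le_ncard_of_injOn q hmaps (hinj.mono fun x hx => hker x hx.1)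
          (boundedCombinations_finite _ _)
    _ ≤ (2 * (r * (E + 1) ^ m) + 1) ^ n := ncard_boundedCombinations_le _ _
    _ ≤ (3 * (r * (E + 1)) ^ m) ^ n := Nat.pow_le_pow_left hbase n
    _ = 3 ^ n * (r * (E + 1)) ^ (m * n) := by rw [mul_pow, pow_mul]

theorem exists_ncard_periodicPts_inter_nsmul_orbitBall_le [IsNoetherianRing R]
    (u : Rˣ) {B : Set M} (hB : B.Finite) :
    ∃ C d : ℕ, ∀ r E : ℕ, 0 < r →
      (Function.periodicPts (u • · : M → M) ∩ r • orbitBall u B E).ncard ≤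
        C * (r * (E + 1)) ^ d := by
  let K₀ := Submodule.span R B
  have : IsNoetherian R K₀ := isNoetherian_of_fg_of_noetherian _ (Submodule.fg_span hB)
  obtain ⟨C, d, h⟩ := exists_ncard_periodicPts_inter_nsmul_orbitBall_le_of_isNoetherian u
    (hB.preimage K₀.injective_subtype.injOn)
  refine ⟨C, d, fun r E hr => ?_⟩
  have hB' : K₀.subtype '' (K₀.subtype ⁻¹' B) = B := by
    refine Set.image_preimage_eq_of_subset ?_
    rw [Submodule.coe_subtype, Subtype.range_coe]
    exact Submodule.subset_span
  rw [← hB', ← K₀.subtype.image_periodicPts_inter_nsmul_orbitBall K₀.injective_subtype,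
    Set.ncard_image_of_injective _ K₀.injective_subtype]
  exact h r E hr

end Periodic

instance {R : Type*} [CommRing R] [IsNoetherianRing R] : IsNoetherianRing R[T;T⁻¹] :=
  IsLocalization.isNoetherianRing (Submonoid.powers (Polynomial.X : Polynomial R)) R[T;T⁻¹]
    inferInstance

noncomputable def LaurentPolynomial.unitT (R : Type*) [Semiring R] : R[T;T⁻¹]ˣ :=
  Units.map (AddMonoidAlgebra.of R ℤ) (toUnits (Multiplicative.ofAdd 1))

noncomputable section LaurentModule

variable {K : Type*} [CommGroup K]

def MulAut.toIntEnd : MulAut K →* Module.End ℤ (Additive K) where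
  toFun ψ := (MonoidHom.toAdditive ψ.toMonoidHom).toIntLinearMap
  map_one' := rfl
  map_mul' _ _ := rfl

/-- `K`, written additively, as a `ℤ[T;T⁻¹]`-module on which `T` acts by `φ`. -/
def LaurentModule (_φ : MulAut K) : Type _ := Additive K

variable (φ : MulAut K)

instance : AddCommGroup (LaurentModule φ) := inferInstanceAs (AddCommGroup (Additive K))

instance : Module ℤ[T;T⁻¹] (LaurentModule φ) :=
  Module.compHom (Additive K) (AddMonoidAlgebra.lift ℤ (Module.End ℤ (Additive K)) ℤ
    (MulAut.toIntEnd.comp (zpowersHom (MulAut K) φ))).toRingHom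

def LaurentModule.of : K → LaurentModule φ := Additive.ofMul

theorem LaurentModule.of_injective : Function.Injective (LaurentModule.of φ) :=
  Additive.ofMul.injective

@[simp] theorem LaurentModule.of_one : LaurentModule.of φ 1 = 0 := rfl

theorem LaurentModule.of_mul (x y : K) :
    LaurentModule.of φ (x * y) = LaurentModule.of φ x + LaurentModule.of φ y := rfl

theorem LaurentModule.zpow_smul_of (e : ℤ) (x : K) :
    unitT ℤ ^ e • LaurentModule.of φ x = LaurentModule.of φ ((φ ^ e) x) := by
  rw [Units.smul_def, unitT, ← map_zpow, ← map_zpow, Units.coe_map]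
  change AddMonoidAlgebra.lift ℤ (Module.End ℤ (Additive K)) ℤ
    (MulAut.toIntEnd.comp (zpowersHom (MulAut K) φ)) (AddMonoidAlgebra.of ℤ ℤ _)
    (Additive.ofMul x) = _
  rw [AddMonoidAlgebra.lift_of]
  simp [MulAut.toIntEnd, LaurentModule.of]

end LaurentModule

section SemidirectProduct

variable {K : Type*} [CommGroup K] {φ : MulAut K}

theorem SemidirectProduct.natAbs_right_le_of_mem_pow {N : Type*} [Group N]
    {ψ : Multiplicative ℤ →* MulAut N} {S : Set (N ⋊[ψ] Multiplicative ℤ)} {c : ℕ}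
    (hS : ∀ s ∈ S, (Multiplicative.toAdd s.right).natAbs ≤ c) {r : ℕ}
    {g : N ⋊[ψ] Multiplicative ℤ} (hg : g ∈ S ^ r) :
    (Multiplicative.toAdd g.right).natAbs ≤ c * r := by
  induction r generalizing g with
  | zero =>
    rw [pow_zero, Set.mem_one] at hg
    simp [hg]
  | succ r ih =>
    rw [pow_succ] at hg
    obtain ⟨h, hh, s, hs, rfl⟩ := hg
    rw [SemidirectProduct.mul_right, toAdd_mul, mul_add_one]
    exact (Int.natAbs_add_le _ _).trans (add_le_add (ih hh) (hS s hs))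

theorem LaurentModule.of_mem_periodicPts {a : K} (ha : a ∈ periodicPts φ) :
    LaurentModule.of φ a ∈ Function.periodicPts (unitT ℤ • · : LaurentModule φ → _) := by
  obtain ⟨n, hn, hfix⟩ := ha
  refine mem_periodicPts_smul.2 ⟨n, hn, ?_⟩
  rw [← zpow_natCast, LaurentModule.zpow_smul_of, zpow_natCast, hfix]

theorem LaurentModule.of_left_mem_nsmul_orbitBall
    {S : Set (K ⋊[zpowersHom (MulAut K) φ] Multiplicative ℤ)} {c : ℕ}
    (hS : ∀ s ∈ S, (Multiplicative.toAdd s.right).natAbs ≤ c) {r : ℕ}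
    {g : K ⋊[zpowersHom (MulAut K) φ] Multiplicative ℤ} (hg : g ∈ S ^ r) :
    LaurentModule.of φ g.left ∈
      r • orbitBall (unitT ℤ) ((LaurentModule.of φ ∘ SemidirectProduct.left) '' S)
        (c * r) := by
  induction r generalizing g with
  | zero =>
    rw [pow_zero, Set.mem_one] at hg
    simp [hg]
  | succ r ih =>
    rw [pow_succ] at hg
    obtain ⟨h, hh, s, hs, rfl⟩ := hg
    have hcr : c * r ≤ c * (r + 1) := Nat.mul_le_mul_left c r.le_succ
    rw [succ_nsmul, SemidirectProduct.mul_left, zpowersHom_apply, LaurentModule.of_mul,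
      ← LaurentModule.zpow_smul_of]
    refine Set.add_mem_add (Set.nsmul_subset_nsmul_left (orbitBall_mono _ _ hcr) (ih hh))
      ⟨_, (SemidirectProduct.natAbs_right_le_of_mem_pow hS hh).trans hcr, _, ⟨s, hs, rfl⟩,
        rfl⟩

theorem LaurentModule.ncard_map_inl_periodicPts_inter_pow_le
    {S : Set (K ⋊[zpowersHom (MulAut K) φ] Multiplicative ℤ)} (hSfin : S.Finite) {c : ℕ}
    (hS : ∀ s ∈ S, (Multiplicative.toAdd s.right).natAbs ≤ c) (r : ℕ) :
    (((Subgroup.map SemidirectProduct.inl (periodicPts φ) :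
        Subgroup (K ⋊[zpowersHom (MulAut K) φ] Multiplicative ℤ)) : Set _) ∩ S ^ r).ncard ≤
      (Function.periodicPts (unitT ℤ • · : LaurentModule φ → _) ∩
        r • orbitBall (unitT ℤ) ((LaurentModule.of φ ∘ SemidirectProduct.left) '' S)
          (c * r)).ncard := by
  refine Set.ncard_le_ncard_of_injOn (LaurentModule.of φ ∘ SemidirectProduct.left) ?_ ?_
    ((((hSfin.image _).orbitBall _ _).nsmul r).inter_of_right _)
  · rintro _ ⟨⟨a, ha, rfl⟩, hg⟩
    exact ⟨LaurentModule.of_mem_periodicPts ha, LaurentModule.of_left_mem_nsmul_orbitBall hS hg⟩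
  · rintro _ ⟨⟨a, -, rfl⟩, -⟩ _ ⟨⟨b, -, rfl⟩, -⟩ hab
    exact congrArg SemidirectProduct.inl (LaurentModule.of_injective φ hab :)

end SemidirectProduct

theorem periodicPts_polynomial_relative_growth_general
    {K : Type*} [CommGroup K] (φ : MulAut K)
    (S : Set (K ⋊[zpowersHom (MulAut K) φ] Multiplicative ℤ))
    (hSfin : S.Finite) :
    ∃ C d : ℕ, ∀ r : ℕ, 1 ≤ r →
      (((Subgroup.map SemidirectProduct.inl (periodicPts φ) :
          Subgroup (K ⋊[zpowersHom (MulAut K) φ] Multiplicative ℤ)) : Set _) ∩ S ^ r).ncard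
        ≤ C * r ^ d := by
  obtain ⟨c, hc⟩ := (hSfin.image fun s => (Multiplicative.toAdd s.right).natAbs).bddAbove
  replace hc : ∀ s ∈ S, (Multiplicative.toAdd s.right).natAbs ≤ c :=
    fun s hs => hc (Set.mem_image_of_mem _ hs)
  obtain ⟨C, d, hCd⟩ := exists_ncard_periodicPts_inter_nsmul_orbitBall_le (unitT ℤ)
    (hSfin.image (LaurentModule.of φ ∘ SemidirectProduct.left))
  refine ⟨C * (c + 1) ^ d, 2 * d, fun r hr => ?_⟩
  calc _ ≤ _ := LaurentModule.ncard_map_inl_periodicPts_inter_pow_le hSfin hc r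
    _ ≤ C * (r * (c * r + 1)) ^ d := hCd r (c * r) hr
    _ ≤ C * ((c + 1) * r ^ 2) ^ d := by
        have := Nat.le_self_pow two_ne_zero r
        exact Nat.mul_le_mul_left C (Nat.pow_le_pow_left (by nlinarith) d)
    _ = C * (c + 1) ^ d * r ^ (2 * d) := by rw [mul_pow, ← pow_mul, mul_assoc]

/-- Let `G = K ⋊_φ ⟨t⟩` be a finitely generated abelian-by-cyclic group
(`K` abelian, written multiplicatively, `t` acting by `φ`) and let `S` be any finite symmetric
generating set of `G` containing the identity.  Then the relative growth of the group of
periodic points `P_φ` (viewed inside `G`) is polynomial: there are constants `C, d` with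
`|P_φ ∩ Sʳ| ≤ C·rᵈ` for all `r ≥ 1`. -/
theorem periodicPts_polynomial_relative_growth
    {K : Type*} [CommGroup K] (φ : MulAut K)
    (S : Set (K ⋊[zpowersHom (MulAut K) φ] Multiplicative ℤ))
    (hSfin : S.Finite) (hSsymm : S⁻¹ = S)
    (hS1 : (1 : K ⋊[zpowersHom (MulAut K) φ] Multiplicative ℤ) ∈ S)
    (hSgen : Subgroup.closure S = ⊤) :
    ∃ C d : ℕ, ∀ r : ℕ, 1 ≤ r →
      (((Subgroup.map SemidirectProduct.inl (periodicPts φ) :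
          Subgroup (K ⋊[zpowersHom (MulAut K) φ] Multiplicative ℤ)) : Set _) ∩ S ^ r).ncard
        ≤ C * r ^ d :=
  periodicPts_polynomial_relative_growth_general φ S hSfin
end

section
/- Let k ≥ 2 be an integer and let a and b be positive integers such that b/a is not an integer power of k, i.e. b ≠ kⁱ·a in ℚ for every i ∈ ℤ. Then the set {n ∈ ℕ : there exists j ∈ ℕ with j < n such that (kⁿ − 1) divides (kʲ·a − b) in ℤ} is finite. -/
/-!
Multiplying by `k^(n-j)` and using `kⁿ ≡ 1` turns `kʲ·a ≡ b (mod kⁿ - 1)` into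
`k^(n-j)·b ≡ a`. One of `j`, `n - j` is at most `n / 2`, and once `n ≥ 2(a + b)` both sides of
the corresponding congruence lie in `(0, kⁿ - 1]`, so it is an equality: `b = kʲ·a` or
`a = k^(n-j)·b`, and `b / a` is a power of `k`.
-/

theorem Int.eq_of_dvd_sub_of_pos_of_le {m x y : ℤ} (h : m ∣ x - y) (hx : 0 < x) (hxm : x ≤ m)
    (hy : 0 < y) (hym : y ≤ m) : x = y :=
  sub_eq_zero.mp <| Int.eq_zero_of_abs_lt_dvd h <| abs_sub_lt_iff.mpr ⟨by linarith, by linarith⟩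

theorem dvd_pow_mul_sub_of_dvd_pow_add_sub_one {R : Type*} [CommRing R] {k a b : R} {i j : ℕ}
    (h : k ^ (i + j) - 1 ∣ k ^ j * a - b) : k ^ (i + j) - 1 ∣ k ^ i * b - a := by
  have hrot : k ^ i * b - a = (k ^ (i + j) - 1) * a - k ^ i * (k ^ j * a - b) := by ring
  rw [hrot]
  exact dvd_sub (dvd_mul_right _ _) (h.mul_left _)

section

variable {k : ℤ} (hk : 2 ≤ k)
include hk

theorem pow_mul_lt_pow_of_add_le {t x n : ℕ} (h : t + x ≤ n) : k ^ t * x < k ^ n :=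
  calc k ^ t * x < k ^ t * k ^ x := by
        gcongr
        calc (x : ℤ) < 2 ^ x := mod_cast Nat.lt_two_pow_self
          _ ≤ k ^ x := pow_le_pow_left₀ (by norm_num) hk x
    _ = k ^ (t + x) := (pow_add k t x).symm
    _ ≤ k ^ n := pow_le_pow_right₀ (by linarith) h

theorem eq_pow_mul_of_pow_sub_one_dvd {a b t n : ℕ} (ha : 0 < a) (hb : 0 < b) (hta : t + a ≤ n)
    (hbn : b ≤ n) (h : k ^ n - 1 ∣ k ^ t * a - b) : (b : ℤ) = k ^ t * a := by
  have hx : k ^ t * a < k ^ n := pow_mul_lt_pow_of_add_le hk hta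
  have hy : (b : ℤ) < k ^ n := by
    simpa using pow_mul_lt_pow_of_add_le hk (t := 0) (x := b) (by omega)
  exact (Int.eq_of_dvd_sub_of_pos_of_le h (by positivity) (by linarith) (by positivity)
    (by linarith)).symm

theorem exists_eq_zpow_mul_of_pow_sub_one_dvd {a b j n : ℕ} (ha : 0 < a) (hb : 0 < b)
    (hn : 2 * (a + b) ≤ n) (hj : j ≤ n) (h : k ^ n - 1 ∣ k ^ j * a - b) :
    ∃ i : ℤ, (b : ℚ) = (k : ℚ) ^ i * a := by
  rcases le_or_gt (2 * j) n with hsmall | hlarge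
  · refine ⟨j, ?_⟩
    have hb_eq := eq_pow_mul_of_pow_sub_one_dvd hk ha hb (by omega) (by omega) h
    rw [zpow_natCast]
    exact_mod_cast hb_eq
  · obtain ⟨i, rfl⟩ : ∃ i, n = i + j := ⟨n - j, by omega⟩
    have ha_eq := eq_pow_mul_of_pow_sub_one_dvd hk hb ha (by omega) (by omega)
      (dvd_pow_mul_sub_of_dvd_pow_add_sub_one h)
    refine ⟨-i, ?_⟩
    have hkq : (k : ℚ) ≠ 0 := by exact_mod_cast (show k ≠ 0 by omega)
    rw [zpow_neg, zpow_natCast, show (a : ℚ) = (k : ℚ) ^ i * b by exact_mod_cast ha_eq]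
    field_simp

end

/-- Let `k ≥ 2` and let `a, b` be positive integers such that `b/a` is not an
integer power of `k` (i.e. `b ≠ kⁱ·a` in `ℚ` for every `i ∈ ℤ`). Then there are only finitely
many `n` for which there exists `j < n` with `(kⁿ - 1) ∣ (kʲ·a - b)` in `ℤ`. -/
theorem finitely_many_n_with_power_congruence
    (k : ℤ) (hk : 2 ≤ k) (a b : ℤ) (ha : 0 < a) (hb : 0 < b)
    (hq : ∀ i : ℤ, (b : ℚ) ≠ (k : ℚ) ^ i * (a : ℚ)) :
    {n : ℕ | ∃ j : ℕ, j < n ∧ (k ^ n - 1) ∣ (k ^ j * a - b)}.Finite := by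
  lift a to ℕ using ha.le
  lift b to ℕ using hb.le
  refine (Set.finite_Iio (2 * (a + b))).subset fun n ⟨j, hjn, h⟩ => ?_
  by_contra hn
  obtain ⟨i, hi⟩ := exists_eq_zpow_mul_of_pow_sub_one_dvd hk (mod_cast ha) (mod_cast hb)
    (not_lt.mp hn) hjn.le h
  exact hq i (mod_cast hi)
end
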